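/- arXiv:2004.12044 — 3 statements merged into one kernel-verified Lean document; each statement's English description precedes it below -/
import Mathlib

section
/- For every complex number q with 0 < |q| < 1: ∑_{n≥0} (-1)^n q^{n(n+1)/2} ∑_{k=0}^{n} 1/(q;q)_k = ((q;q)_∞)². -/
/-- The finite q-Pochhammer symbol `(w; q)_n = ∏_{i=0}^{n-1} (1 - w q^i)`. -/
noncomputable def qPoch (q w : ℂ) (n : ℕ) : ℂ :=
  ∏ i ∈ Finset.range n, (1 - w * q ^ i)

/-- The infinite q-Pochhammer symbol `(w; q)_∞ = ∏_{i=0}^{∞} (1 - w q^i)`. -/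
noncomputable def qPochInf (q w : ℂ) : ℂ :=
  ∏' i : ℕ, (1 - w * q ^ i)

open Finset Filter Topology

namespace Stmt2Aux

lemma Tsucc (k : ℕ) : (k+1)*(k+1+1)/2 = k*(k+1)/2 + (k+1) := by
  have h2 : 2 ∣ k*(k+1) := (Nat.even_mul_succ_self k).two_dvd
  have h : (k+1)*(k+1+1) = k*(k+1) + 2*(k+1) := by ring
  omega

lemma Tadd (k m : ℕ) : (k+m)*((k+m)+1)/2 = k*(k+1)/2 + (m*(m+1)/2 + k*m) := by
  have h2 : 2 ∣ k*(k+1) := (Nat.even_mul_succ_self k).two_dvd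
  have h3 : 2 ∣ m*(m+1) := (Nat.even_mul_succ_self m).two_dvd
  have h4 : 2 ∣ (k+m)*((k+m)+1) := (Nat.even_mul_succ_self (k+m)).two_dvd
  have h : (k+m)*((k+m)+1) = k*(k+1) + (m*(m+1) + 2*(k*m)) := by ring
  omega

lemma Tge (n : ℕ) : n ≤ n*(n+1)/2 := by
  have h2 : 2 ∣ n*(n+1) := (Nat.even_mul_succ_self n).two_dvd
  rcases n with _ | m
  · simp
  · have h : 2*(m+1) ≤ (m+1)*(m+1+1) := by
      have := Nat.mul_le_mul_left (m+1) (show 2 ≤ m+1+1 by omega)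
      omega
    omega

variable {q : ℂ}

lemma qPoch_succ (k : ℕ) : qPoch q q (k+1) = qPoch q q k * (1 - q * q^k) := by
  simp [qPoch, Finset.prod_range_succ]

lemma factor_ne_zero (hq : ‖q‖ < 1) {w : ℂ} (hw : ‖w‖ < 1) (i : ℕ) :
    1 - w * q ^ i ≠ 0 := by
  intro h
  have h1 : (1 : ℂ) = w * q ^ i := by linear_combination h
  have : (1:ℝ) ≤ ‖w‖ * ‖q‖^i := by
    have := congrArg (‖·‖) h1
    simpa [norm_mul, norm_pow] using this.le
  have hqi : ‖q‖ ^ i ≤ 1 := pow_le_one₀ (norm_nonneg q) hq.le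
  nlinarith [norm_nonneg w, pow_nonneg (norm_nonneg q) i]

lemma qPoch_ne_zero (hq : ‖q‖ < 1) (k : ℕ) : qPoch q q k ≠ 0 := by
  refine Finset.prod_ne_zero_iff.2 fun i _ => factor_ne_zero hq hq i

lemma log_summable (hq : ‖q‖ < 1) :
    Summable (fun i : ℕ => Real.log (1 - ‖q‖^(i+1))) := by
  have hr0 : (0:ℝ) ≤ ‖q‖ := norm_nonneg q
  have hx : ∀ i : ℕ, ‖q‖^(i+1) ≤ ‖q‖ := fun i => by
    calc ‖q‖^(i+1) ≤ ‖q‖^1 := pow_le_pow_of_le_one hr0 hq.le (by omega)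
    _ = ‖q‖ := pow_one _
  have hxpos : ∀ i : ℕ, (0:ℝ) < 1 - ‖q‖^(i+1) := fun i => by
    have := hx i; linarith
  apply Summable.of_norm_bounded (g := fun i => (1 - ‖q‖)⁻¹ * ‖q‖^(i+1))
  · exact ((summable_geometric_of_lt_one hr0 hq).mul_left _).comp_injective
      (add_left_injective 1)
  · intro i
    have hxi := hx i
    have hpi := hxpos i
    have hp0 : (0:ℝ) ≤ ‖q‖^(i+1) := pow_nonneg hr0 _
    have h1 : Real.log (1 - ‖q‖^(i+1)) ≤ 0 :=
      Real.log_nonpos (by linarith) (by linarith)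
    rw [Real.norm_eq_abs, abs_of_nonpos h1]
    have h2 : Real.log ((1 - ‖q‖^(i+1))⁻¹) ≤ (1 - ‖q‖^(i+1))⁻¹ - 1 :=
      Real.log_le_sub_one_of_pos (inv_pos.2 hpi)
    rw [Real.log_inv] at h2
    have h3 : (1 - ‖q‖^(i+1))⁻¹ - 1 = ‖q‖^(i+1) / (1 - ‖q‖^(i+1)) := by
      rw [eq_div_iff hpi.ne', sub_mul, inv_mul_cancel₀ hpi.ne']; ring
    have h4 : ‖q‖^(i+1) / (1 - ‖q‖^(i+1)) ≤ ‖q‖^(i+1) / (1 - ‖q‖) := by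
      gcongr <;> linarith
    have h5 : ‖q‖^(i+1) / (1 - ‖q‖) = (1 - ‖q‖)⁻¹ * ‖q‖^(i+1) := div_eq_inv_mul _ _
    linarith

/-- Uniform positive lower bound for `‖(q;q)_k‖`. -/
noncomputable def delta (q : ℂ) : ℝ := Real.exp (∑' i : ℕ, Real.log (1 - ‖q‖^(i+1)))

lemma delta_pos : 0 < delta q := Real.exp_pos _

lemma delta_le (hq : ‖q‖ < 1) (k : ℕ) : delta q ≤ ‖qPoch q q k‖ := by
  have hr0 : (0:ℝ) ≤ ‖q‖ := norm_nonneg q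
  have hx : ∀ i : ℕ, ‖q‖^(i+1) ≤ ‖q‖ := fun i => by
    calc ‖q‖^(i+1) ≤ ‖q‖^1 := pow_le_pow_of_le_one hr0 hq.le (by omega)
    _ = ‖q‖ := pow_one _
  have hxpos : ∀ i : ℕ, (0:ℝ) < 1 - ‖q‖^(i+1) := fun i => by
    have := hx i; linarith
  have step1 : ∏ i ∈ range k, (1 - ‖q‖^(i+1)) ≤ ‖qPoch q q k‖ := by
    rw [qPoch, norm_prod]
    refine Finset.prod_le_prod (fun i _ => (hxpos i).le) (fun i _ => ?_)
    have := norm_sub_norm_le (1 : ℂ) (q * q^i)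
    simpa [norm_mul, norm_pow, pow_succ'] using this
  have step2 : delta q ≤ ∏ i ∈ range k, (1 - ‖q‖^(i+1)) := by
    have hprod : ∏ i ∈ range k, (1 - ‖q‖^(i+1)) =
        Real.exp (∑ i ∈ range k, Real.log (1 - ‖q‖^(i+1))) := by
      rw [Real.exp_sum]
      exact Finset.prod_congr rfl fun i _ => (Real.exp_log (hxpos i)).symm
    rw [hprod, delta]
    apply Real.exp_le_exp.2
    have hsplit := Summable.sum_add_tsum_nat_add (f := fun i : ℕ => Real.log (1 - ‖q‖^(i+1))) k
      (log_summable hq)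
    have htail : ∑' i : ℕ, Real.log (1 - ‖q‖^(i+k+1)) ≤ 0 := by
      refine tsum_nonpos fun i => Real.log_nonpos ?_ ?_
      · have h1 : ‖q‖^(i+k+1) ≤ 1 := pow_le_one₀ hr0 hq.le
        linarith
      · have h0 : (0:ℝ) ≤ ‖q‖^(i+k+1) := pow_nonneg hr0 _
        linarith
    rw [← hsplit]
    simpa using htail
  linarith

/-- Term of Euler's series. -/
noncomputable def eterm (q z : ℂ) (k : ℕ) : ℂ :=
  (-1)^k * q^(k*(k+1)/2) * z^k / qPoch q q k

lemma eterm_zero (q z : ℂ) : eterm q z 0 = 1 := by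
  simp [eterm, qPoch]

lemma eterm_norm (hq : ‖q‖ < 1) (z : ℂ) (k : ℕ) :
    ‖eterm q z k‖ ≤ (delta q)⁻¹ * (‖q‖^(k*(k+1)/2) * ‖z‖^k) := by
  have hd := delta_pos (q := q)
  have hdk := delta_le hq k
  rw [eterm, norm_div, norm_mul, norm_mul, norm_pow, norm_pow, norm_pow,
    norm_neg, norm_one, one_pow, one_mul]
  rw [div_eq_inv_mul]
  gcongr
  all_goals first
    | positivity
    | exact inv_anti₀ hd hdk

lemma eterm_norm' (hq : ‖q‖ < 1) {z : ℂ} (hz : ‖z‖ ≤ 1) (k : ℕ) :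
    ‖eterm q z k‖ ≤ (delta q)⁻¹ * ‖q‖^k := by
  refine (eterm_norm hq z k).trans ?_
  have hd := delta_pos (q := q)
  have h1 : ‖q‖^(k*(k+1)/2) ≤ ‖q‖^k :=
    pow_le_pow_of_le_one (norm_nonneg q) hq.le (Tge k)
  have h2 : ‖z‖^k ≤ 1 := pow_le_one₀ (norm_nonneg z) hz
  calc (delta q)⁻¹ * (‖q‖^(k*(k+1)/2) * ‖z‖^k)
      ≤ (delta q)⁻¹ * (‖q‖^k * 1) := by
        gcongr
        all_goals positivity
    _ = (delta q)⁻¹ * ‖q‖^k := by ring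

lemma eterm_summable (hq : ‖q‖ < 1) {z : ℂ} (hz : ‖z‖ ≤ 1) :
    Summable (eterm q z) :=
  Summable.of_norm_bounded
    ((summable_geometric_of_lt_one (norm_nonneg q) hq).mul_left _)
    (eterm_norm' hq hz)

/-- Euler's series. -/
noncomputable def F (q z : ℂ) : ℂ := ∑' k : ℕ, eterm q z k

lemma multipliable_aux (hq : ‖q‖ < 1) {w : ℂ} (hw : ‖w‖ < 1) :
    Multipliable (fun i : ℕ => 1 - w * q^i) := by
  have hr0 : (0:ℝ) ≤ ‖q‖ := norm_nonneg q
  refine Complex.multipliable_of_summable_log ?_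
  set C : ℝ := ‖w‖ * ((1 - ‖w‖)⁻¹ / 2 + 1) with hC
  apply Summable.of_norm_bounded (g := fun i => C * ‖q‖^i)
    ((summable_geometric_of_lt_one hr0 hq).mul_left _)
  intro i
  have hui : ‖-(w * q^i)‖ = ‖w‖ * ‖q‖^i := by
    rw [norm_neg, norm_mul, norm_pow]
  have hule : ‖-(w * q^i)‖ ≤ ‖w‖ := by
    rw [hui]
    have : ‖q‖^i ≤ 1 := pow_le_one₀ hr0 hq.le
    nlinarith [norm_nonneg w]
  have hul : ‖-(w * q^i)‖ < 1 := lt_of_le_of_lt hule hw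
  have hb := Complex.norm_log_one_add_le hul
  have heq : (1 : ℂ) + -(w * q^i) = 1 - w * q^i := by ring
  rw [heq] at hb
  refine hb.trans ?_
  set u : ℝ := ‖-(w * q^i)‖ with hu
  have hu0 : 0 ≤ u := norm_nonneg _
  have h1 : (1 - u)⁻¹ ≤ (1 - ‖w‖)⁻¹ := by
    apply inv_anti₀ <;> linarith
  have h2 : u^2 * (1-u)⁻¹ / 2 + u ≤ u * ((1 - ‖w‖)⁻¹ / 2 + 1) := by
    have hsq : u^2 ≤ u * 1 := by nlinarith
    have hinv0 : (0:ℝ) ≤ (1-u)⁻¹ := by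
      apply inv_nonneg.2; linarith
    have hinv0' : (0:ℝ) ≤ (1-‖w‖)⁻¹ := by
      apply inv_nonneg.2; linarith
    nlinarith
  refine h2.trans ?_
  rw [hC, hui]
  have hq0 : (0:ℝ) ≤ ‖q‖^i := pow_nonneg hr0 _
  nlinarith [norm_nonneg w, inv_nonneg.2 (show (0:ℝ) ≤ 1 - ‖w‖ by linarith)]

lemma funceq (hq : ‖q‖ < 1) {z : ℂ} (hz : ‖z‖ ≤ 1) :
    F q z = (1 - z*q) * F q (z*q) := by
  have hzq : ‖z*q‖ ≤ 1 := by
    rw [norm_mul]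
    nlinarith [norm_nonneg z, norm_nonneg q]
  have hs := eterm_summable hq hz
  have hs' := eterm_summable hq hzq
  have hs'1 : Summable (fun k => eterm q (z*q) (k+1)) := (summable_nat_add_iff 1).2 hs'
  have key : ∀ k : ℕ, eterm q z (k+1) = eterm q (z*q) (k+1) - (z*q) * eterm q (z*q) k := by
    intro k
    have hP := qPoch_succ (q := q) k
    have hPk := qPoch_ne_zero hq k
    have hPk1 := qPoch_ne_zero hq (k+1)
    have hf : (1 : ℂ) - q * q^k ≠ 0 := factor_ne_zero hq hq k
    rw [eterm, eterm, eterm, show (k+1)*(k+1+1)/2 = k*(k+1)/2 + (k+1) from Tsucc k,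
      pow_add, hP]
    field_simp
    ring
  calc F q z = eterm q z 0 + ∑' k, eterm q z (k+1) := Summable.tsum_eq_zero_add hs
    _ = 1 + ∑' k, (eterm q (z*q) (k+1) - (z*q) * eterm q (z*q) k) := by
        rw [eterm_zero]
        congr 1
        exact tsum_congr key
    _ = 1 + (∑' k, eterm q (z*q) (k+1) - ∑' k, (z*q) * eterm q (z*q) k) := by
        rw [Summable.tsum_sub hs'1 (hs'.mul_left _)]
    _ = 1 + ((F q (z*q) - 1) - (z*q) * F q (z*q)) := by
        rw [tsum_mul_left]
        congr 2
        have := Summable.tsum_eq_zero_add hs'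
        rw [eterm_zero] at this
        rw [F, this]
        ring
    _ = (1 - z*q) * F q (z*q) := by ring
  
lemma iterate (hq : ‖q‖ < 1) {z : ℂ} (hz : ‖z‖ ≤ 1) (N : ℕ) :
    F q z = (∏ i ∈ range N, (1 - (z*q) * q^i)) * F q (z * q^N) := by
  induction N with
  | zero => simp
  | succ N ih =>
      have hzN : ‖z * q^N‖ ≤ 1 := by
        rw [norm_mul, norm_pow]
        have h1 : ‖q‖^N ≤ 1 := pow_le_one₀ (norm_nonneg q) hq.le
        nlinarith [norm_nonneg z, pow_nonneg (norm_nonneg q) N]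
      have step := funceq hq hzN
      have h1 : z * q^N * q = z * q^(N+1) := by ring
      rw [h1] at step
      rw [ih, step, Finset.prod_range_succ]
      ring

lemma F_sub_one_norm (hq : ‖q‖ < 1) {w : ℂ} (hw : ‖w‖ ≤ 1) :
    ‖F q w - 1‖ ≤ ((delta q)⁻¹ * (1 - ‖q‖)⁻¹) * ‖w‖ := by
  have hr0 : (0:ℝ) ≤ ‖q‖ := norm_nonneg q
  have hd := delta_pos (q := q)
  have hs := eterm_summable hq hw
  have hs1 : Summable (fun k => eterm q w (k+1)) := (summable_nat_add_iff 1).2 hs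
  have heq : F q w - 1 = ∑' k, eterm q w (k+1) := by
    have := Summable.tsum_eq_zero_add hs
    rw [eterm_zero] at this
    rw [F, this]; ring
  rw [heq]
  have hbound : ∀ k : ℕ, ‖eterm q w (k+1)‖ ≤ ((delta q)⁻¹ * ‖w‖) * ‖q‖^k := by
    intro k
    refine (eterm_norm hq w (k+1)).trans ?_
    have h1 : ‖q‖^((k+1)*(k+1+1)/2) ≤ ‖q‖^k :=
      pow_le_pow_of_le_one hr0 hq.le (le_trans (by omega) (Tge (k+1)))
    have h2 : ‖w‖^(k+1) ≤ ‖w‖ := by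
      calc ‖w‖^(k+1) ≤ ‖w‖^1 := pow_le_pow_of_le_one (norm_nonneg w) hw (by omega)
        _ = ‖w‖ := pow_one _
    have hq0 : (0:ℝ) ≤ ‖q‖^((k+1)*(k+1+1)/2) := pow_nonneg hr0 _
    have hq0' : (0:ℝ) ≤ ‖q‖^k := pow_nonneg hr0 _
    have hw0 : (0:ℝ) ≤ ‖w‖^(k+1) := pow_nonneg (norm_nonneg w) _
    calc (delta q)⁻¹ * (‖q‖^((k+1)*(k+1+1)/2) * ‖w‖^(k+1))
        ≤ (delta q)⁻¹ * (‖q‖^k * ‖w‖) := by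
          apply mul_le_mul_of_nonneg_left _ (inv_nonneg.2 hd.le)
          calc ‖q‖^((k+1)*(k+1+1)/2) * ‖w‖^(k+1) ≤ ‖q‖^k * ‖w‖^(k+1) := by gcongr
            _ ≤ ‖q‖^k * ‖w‖ := by gcongr
      _ = ((delta q)⁻¹ * ‖w‖) * ‖q‖^k := by ring
  have hsum : Summable (fun k : ℕ => ((delta q)⁻¹ * ‖w‖) * ‖q‖^k) :=
    (summable_geometric_of_lt_one hr0 hq).mul_left _
  calc ‖∑' k, eterm q w (k+1)‖ ≤ ∑' k, ‖eterm q w (k+1)‖ :=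
        norm_tsum_le_tsum_norm (summable_norm_iff.2 hs1)
    _ ≤ ∑' k : ℕ, ((delta q)⁻¹ * ‖w‖) * ‖q‖^k :=
        Summable.tsum_le_tsum hbound (summable_norm_iff.2 hs1) hsum
    _ = ((delta q)⁻¹ * ‖w‖) * ∑' k : ℕ, ‖q‖^k := tsum_mul_left
    _ = ((delta q)⁻¹ * ‖w‖) * (1 - ‖q‖)⁻¹ := by rw [tsum_geometric_of_lt_one hr0 hq]
    _ = ((delta q)⁻¹ * (1 - ‖q‖)⁻¹) * ‖w‖ := by ring

lemma F_tendsto_one (hq : ‖q‖ < 1) {z : ℂ} (hz : ‖z‖ ≤ 1) :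
    Tendsto (fun N : ℕ => F q (z * q^N)) atTop (𝓝 1) := by
  have hr0 : (0:ℝ) ≤ ‖q‖ := norm_nonneg q
  have h0 : Tendsto (fun N : ℕ => F q (z * q^N) - 1) atTop (𝓝 0) := by
    apply squeeze_zero_norm (a := fun N => ((delta q)⁻¹ * (1 - ‖q‖)⁻¹) * ‖q‖^N)
    · intro N
      have hzN : ‖z * q^N‖ ≤ 1 := by
        rw [norm_mul, norm_pow]
        have h1 : ‖q‖^N ≤ 1 := pow_le_one₀ hr0 hq.le
        nlinarith [norm_nonneg z, pow_nonneg hr0 N]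
      refine (F_sub_one_norm hq hzN).trans ?_
      rw [norm_mul, norm_pow]
      have hC : (0:ℝ) ≤ (delta q)⁻¹ * (1 - ‖q‖)⁻¹ := by
        have := delta_pos (q := q)
        have : (0:ℝ) ≤ (delta q)⁻¹ := by positivity
        have h2 : (0:ℝ) ≤ (1 - ‖q‖)⁻¹ := inv_nonneg.2 (by linarith)
        positivity
      have h3 : ‖z‖ * ‖q‖^N ≤ ‖q‖^N := by
        nlinarith [pow_nonneg hr0 N, norm_nonneg z]
      exact mul_le_mul_of_nonneg_left h3 hC
    · have := (tendsto_pow_atTop_nhds_zero_of_lt_one hr0 hq).const_mul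
        ((delta q)⁻¹ * (1 - ‖q‖)⁻¹)
      simpa using this
  have := h0.add_const 1
  simpa using this

/-- Euler's identity: `∑ (-1)^k q^{k(k+1)/2} z^k / (q;q)_k = (zq;q)_∞`. -/
lemma euler (hq : ‖q‖ < 1) {z : ℂ} (hz : ‖z‖ ≤ 1) :
    F q z = ∏' i : ℕ, (1 - (z*q) * q^i) := by
  have hzq : ‖z*q‖ < 1 := by
    rw [norm_mul]
    nlinarith [norm_nonneg z, norm_nonneg q]
  have hM := multipliable_aux hq hzq
  have T1 : Tendsto (fun N : ℕ => ∏ i ∈ range N, (1 - (z*q) * q^i)) atTop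
      (𝓝 (∏' i : ℕ, (1 - (z*q) * q^i))) := hM.hasProd.tendsto_prod_nat
  have T2 := F_tendsto_one hq hz
  have T3 := T1.mul T2
  rw [mul_one] at T3
  have T4 : Tendsto (fun _ : ℕ => F q z) atTop (𝓝 (∏' i : ℕ, (1 - (z*q) * q^i))) :=
    T3.congr fun N => (iterate hq hz N).symm
  exact tendsto_nhds_unique tendsto_const_nhds T4

lemma F_one (hq : ‖q‖ < 1) : F q 1 = qPochInf q q := by
  rw [euler hq (by norm_num : ‖(1:ℂ)‖ ≤ 1)]
  simp [qPochInf]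

lemma F_qpow (hq : ‖q‖ < 1) (m : ℕ) : F q (q^m) = F q 1 / qPoch q q m := by
  have h1 : ‖(1:ℂ)‖ ≤ 1 := by norm_num
  have hit := iterate hq h1 m
  simp only [one_mul] at hit
  have hprod : (∏ i ∈ range m, (1 - q * q^i)) = qPoch q q m := rfl
  rw [hprod] at hit
  rw [eq_div_iff (qPoch_ne_zero hq m)]
  rw [hit]; ring

/-- The summand of the original double sum. -/
noncomputable def Hc (q : ℂ) (n k : ℕ) : ℂ :=
  if k ≤ n then (-1)^n * q^(n*(n+1)/2) * (1 / qPoch q q k) else 0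

/-- The summand after reindexing. -/
noncomputable def Gc (q : ℂ) (k m : ℕ) : ℂ :=
  (-1)^(k+m) * q^((k+m)*((k+m)+1)/2) * (1 / qPoch q q k)

lemma norm_term_le (hq : ‖q‖ < 1) (s e k : ℕ) :
    ‖((-1:ℂ))^s * q^e * (1 / qPoch q q k)‖ ≤ (delta q)⁻¹ * ‖q‖^e := by
  have hd := delta_pos (q := q)
  have hdk := delta_le hq k
  rw [norm_mul, norm_mul, norm_pow, norm_pow, norm_neg, norm_one, one_pow, one_mul,
    norm_div, norm_one]
  rw [one_div, mul_comm]
  gcongr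
  all_goals first
    | positivity
    | exact inv_anti₀ hd hdk

lemma Hsummable (hq : ‖q‖ < 1) : Summable (Function.uncurry (Hc q)) := by
  have hr0 : (0:ℝ) ≤ ‖q‖ := norm_nonneg q
  have hd := delta_pos (q := q)
  set D : ℕ × ℕ → ℝ := fun p => if p.2 ≤ p.1 then (delta q)⁻¹ * ‖q‖^p.1 else 0 with hD
  have hDnn : 0 ≤ D := by
    intro p
    simp only [hD]
    split
    · positivity
    · exact le_refl 0
  have hDsum : Summable D := by
    rw [summable_prod_of_nonneg hDnn]
    constructor
    · intro n
      apply summable_of_ne_finset_zero (s := Finset.range (n+1))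
      intro k hk
      simp only [Finset.mem_range] at hk
      simp only [hD]
      rw [if_neg (by omega)]
    · have hval : ∀ n : ℕ, ∑' k : ℕ, D (n, k) = ((n:ℝ)+1) * ((delta q)⁻¹ * ‖q‖^n) := by
        intro n
        rw [tsum_eq_sum (s := Finset.range (n+1))
          (fun k hk => by
            simp only [Finset.mem_range] at hk
            simp only [hD]
            rw [if_neg (by omega)])]
        rw [Finset.sum_congr rfl (fun k hk => by
          simp only [Finset.mem_range] at hk
          simp only [hD]
          rw [if_pos (by omega)])]
        rw [Finset.sum_const, Finset.card_range, nsmul_eq_mul]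
        push_cast
        ring
      apply Summable.congr _ (fun n => (hval n).symm)
      have h1 : Summable (fun n : ℕ => (n:ℝ)^1 * ‖q‖^n) :=
        summable_pow_mul_geometric_of_norm_lt_one 1 (by rwa [Real.norm_eq_abs, abs_of_nonneg hr0])
      have h2 : Summable (fun n : ℕ => ‖q‖^n) := summable_geometric_of_lt_one hr0 hq
      have h3 : Summable (fun n : ℕ => ((n:ℝ)+1) * ‖q‖^n) := by
        apply Summable.congr (h1.add h2)
        intro n; push_cast; ring
      apply Summable.congr (h3.mul_left ((delta q)⁻¹))
      intro n; ring
  apply Summable.of_norm_bounded hDsum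
  rintro ⟨n, k⟩
  simp only [Function.uncurry, Hc, hD]
  split
  · exact (norm_term_le hq n (n*(n+1)/2) k).trans
      (mul_le_mul_of_nonneg_left
        (pow_le_pow_of_le_one (norm_nonneg q) hq.le (Tge n)) (inv_nonneg.2 hd.le))
  · simp

lemma Gsummable (hq : ‖q‖ < 1) : Summable (Function.uncurry (Gc q)) := by
  have hr0 : (0:ℝ) ≤ ‖q‖ := norm_nonneg q
  have hd := delta_pos (q := q)
  have hb : Summable (fun p : ℕ × ℕ => ((delta q)⁻¹ * ‖q‖^p.1) * ‖q‖^p.2) :=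
    Summable.mul_of_nonneg
      ((summable_geometric_of_lt_one hr0 hq).mul_left _)
      (summable_geometric_of_lt_one hr0 hq)
      (fun k => by positivity) (fun m => by positivity)
  apply Summable.of_norm_bounded hb
  rintro ⟨k, m⟩
  simp only [Function.uncurry, Gc]
  refine (norm_term_le hq (k+m) ((k+m)*((k+m)+1)/2) k).trans ?_
  have h1 : ‖q‖^((k+m)*((k+m)+1)/2) ≤ ‖q‖^(k+m) :=
    pow_le_pow_of_le_one hr0 hq.le (Tge (k+m))
  calc (delta q)⁻¹ * ‖q‖^((k+m)*((k+m)+1)/2) ≤ (delta q)⁻¹ * ‖q‖^(k+m) :=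
        mul_le_mul_of_nonneg_left h1 (inv_nonneg.2 hd.le)
    _ = ((delta q)⁻¹ * ‖q‖^k) * ‖q‖^m := by rw [pow_add]; ring

end Stmt2Aux

open Stmt2Aux in
theorem stmt2 (q : ℂ) (h0 : 0 < ‖q‖) (h1 : ‖q‖ < 1) :
    ∑' n : ℕ, (-1 : ℂ) ^ n * q ^ (n * (n + 1) / 2) *
        ∑ k ∈ Finset.range (n + 1), 1 / qPoch q q k =
      (qPochInf q q) ^ 2 := by
  have hq : ‖q‖ < 1 := h1
  have hHs := Hsummable hq
  have hGs := Gsummable hq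
  have stepA : ∀ n : ℕ, (-1:ℂ)^n * q^(n*(n+1)/2) * ∑ k ∈ Finset.range (n+1), 1 / qPoch q q k
      = ∑' k : ℕ, Hc q n k := by
    intro n
    rw [tsum_eq_sum (s := Finset.range (n+1)) (fun k hk => by
      simp only [Finset.mem_range] at hk
      simp only [Hc]
      rw [if_neg (by omega)])]
    rw [Finset.mul_sum]
    refine Finset.sum_congr rfl fun k hk => ?_
    simp only [Finset.mem_range] at hk
    simp only [Hc]
    rw [if_pos (by omega)]
  have stepD : ∀ k : ℕ, ∑' n : ℕ, Hc q n k = ∑' m : ℕ, Gc q k m := by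
    intro k
    have hinj : Function.Injective (fun m : ℕ => m + k) := add_left_injective k
    have hsupp : Function.support (fun n => Hc q n k) ⊆ Set.range (fun m : ℕ => m + k) := by
      intro n hn
      simp only [Function.mem_support, Hc] at hn
      by_cases h : k ≤ n
      · exact ⟨n - k, by simp only []; omega⟩
      · rw [if_neg h] at hn; exact absurd rfl hn
    rw [← hinj.tsum_eq hsupp]
    refine tsum_congr fun m => ?_
    simp only [Hc, Gc]
    rw [if_pos (by omega : k ≤ m + k), Nat.add_comm m k]
  have stepF : ∀ m : ℕ, ∑' k : ℕ, Gc q k m = F q 1 * eterm q 1 m := by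
    intro m
    have hkey : ∀ k : ℕ, Gc q k m = ((-1:ℂ)^m * q^(m*(m+1)/2)) * eterm q (q^m) k := by
      intro k
      simp only [Gc, eterm]
      rw [Tadd k m]
      ring
    rw [tsum_congr hkey, tsum_mul_left]
    rw [show (∑' k : ℕ, eterm q (q^m) k) = F q (q^m) from rfl]
    rw [F_qpow hq m, eterm]
    ring
  calc ∑' n : ℕ, (-1:ℂ)^n * q^(n*(n+1)/2) * ∑ k ∈ Finset.range (n+1), 1 / qPoch q q k
      = ∑' n : ℕ, ∑' k : ℕ, Hc q n k := tsum_congr stepA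
    _ = ∑' k : ℕ, ∑' n : ℕ, Hc q n k :=
        (Summable.tsum_comm' hHs (fun n => hHs.prod_factor n) (fun k => hHs.prod_symm.prod_factor k)).symm
    _ = ∑' k : ℕ, ∑' m : ℕ, Gc q k m := tsum_congr stepD
    _ = ∑' m : ℕ, ∑' k : ℕ, Gc q k m :=
        (Summable.tsum_comm' hGs (fun k => hGs.prod_factor k) (fun m => hGs.prod_symm.prod_factor m)).symm
    _ = ∑' m : ℕ, F q 1 * eterm q 1 m := tsum_congr stepF
    _ = F q 1 * F q 1 := by
        rw [tsum_mul_left]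
        rw [show (∑' m : ℕ, eterm q 1 m) = F q 1 from rfl]
    _ = (qPochInf q q)^2 := by rw [F_one hq]; ring
end

section
/- For integers 0 ≤ r ≤ N and every n ≥ 0, the coefficient of q^n in the power series q^{N(N+1)/2}/(q;q)_r equals p_{r,N}(n), the number of partitions of n into parts ≤ N in which every part ≤ r appears at least once and, if r < N, every part strictly greater than r and at most N appears exactly once. -/
def PartCond (r N n : ℕ) (p : Nat.Partition n) : Prop :=
  (∀ x ∈ p.parts, x ≤ N) ∧
  (∀ x : ℕ, 1 ≤ x → x ≤ r → x ∈ p.parts) ∧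
  (r < N → ∀ x : ℕ, r < x → x ≤ N → p.parts.count x = 1)

/-- `p_{r,N}(n)`, the number of partitions of `n` into parts `≤ N` in which every
part `≤ r` appears at least once and, if `r < N`, every part `> r` and `≤ N`
appears exactly once. -/
noncomputable def prN (r N n : ℕ) : ℕ :=
  Nat.card {p : Nat.Partition n // PartCond r N n p}

open PowerSeries

namespace Stmt3Aux

noncomputable section

variable {α : Type*}

open Finset

open scoped Classical

/-- A convenience constructor for the power series whose coefficients indicate a subset. -/
def indicatorSeries (α : Type*) [Semiring α] (s : Set ℕ) : PowerSeries α :=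
  PowerSeries.mk fun n => if n ∈ s then 1 else 0

theorem coeff_indicator (s : Set ℕ) [Semiring α] (n : ℕ) :
    coeff (R := α) n (indicatorSeries _ s) = if n ∈ s then 1 else 0 :=
  coeff_mk _ _

theorem constantCoeff_indicator (s : Set ℕ) [Semiring α] :
    constantCoeff (R := α) (indicatorSeries _ s) = if 0 ∈ s then 1 else 0 :=
  rfl

theorem num_series' [Field α] (i : ℕ) :
    (1 - (X : PowerSeries α) ^ (i + 1))⁻¹ = indicatorSeries α {k | i + 1 ∣ k} := by
  rw [PowerSeries.inv_eq_iff_mul_eq_one]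
  · ext n
    cases n with
    | zero => simp [mul_sub, zero_pow, constantCoeff_indicator]
    | succ n =>
      simp only [coeff_one, if_false, mul_sub, mul_one, coeff_indicator,
        LinearMap.map_sub, reduceCtorEq]
      simp_rw [coeff_mul, coeff_X_pow, coeff_indicator, @boole_mul _ _ _ _]
      erw [@sum_ite _ _ _ _ _ (fun _ => Classical.propDecidable _), sum_ite]
      simp_rw [@filter_filter _ _ _ _ _, sum_const_zero, add_zero, sum_const, nsmul_eq_mul, mul_one,
        sub_eq_iff_eq_add, zero_add]
      symm
      split_ifs with h
      · suffices #{a ∈ antidiagonal (n + 1) | i + 1 ∣ a.fst ∧ a.snd = i + 1} = 1 by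
          simp only [Set.mem_setOf_eq]; convert congr_arg ((↑) : ℕ → α) this; norm_cast
        rw [card_eq_one]
        cases' h with p hp
        refine ⟨((i + 1) * (p - 1), i + 1), ?_⟩
        ext ⟨a₁, a₂⟩
        simp only [mem_filter, Prod.mk.injEq, HasAntidiagonal.mem_antidiagonal, mem_singleton]
        constructor
        · rintro ⟨a_left, ⟨a, rfl⟩, rfl⟩
          refine ⟨?_, rfl⟩
          rw [Nat.mul_sub_left_distrib, ← hp, ← a_left, mul_one, Nat.add_sub_cancel]
        · rintro ⟨rfl, rfl⟩
          match p with
          | 0 => rw [mul_zero] at hp; cases hp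
          | p + 1 => rw [hp]; simp [mul_add]
      · suffices #{a ∈ antidiagonal (n + 1) | i + 1 ∣ a.fst ∧ a.snd = i + 1} = 0 by
          simp only [Set.mem_setOf_eq]; convert congr_arg ((↑) : ℕ → α) this; norm_cast
        rw [card_eq_zero]
        apply eq_empty_of_forall_notMem
        simp only [Prod.forall, mem_filter, not_and, HasAntidiagonal.mem_antidiagonal]
        rintro _ h₁ h₂ ⟨a, rfl⟩ rfl
        apply h
        simp [← h₂]
  · simp [zero_pow]

-- The main workhorse (copied from the Archive's proof of Euler's partition theorem).
theorem partialGF_prop (α : Type*) [CommSemiring α] (n : ℕ) (s : Finset ℕ) (hs : ∀ i ∈ s, 0 < i)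
    (c : ℕ → Set ℕ) (hc : ∀ i, i ∉ s → 0 ∈ c i) :
    #{p : n.Partition | (∀ j, p.parts.count j ∈ c j) ∧ ∀ j ∈ p.parts, j ∈ s} =
      coeff (R := α) n (∏ i ∈ s, indicatorSeries α ((· * i) '' c i)) := by
  simp_rw [coeff_prod, coeff_indicator, prod_boole, sum_boole]
  apply congr_arg
  simp only [mem_univ, forall_true_left, not_and, not_forall, exists_prop,
    Set.mem_image, not_exists]
  set φ : (a : Nat.Partition n) →
    a ∈ filter (fun p ↦ (∀ (j : ℕ), Multiset.count j p.parts ∈ c j) ∧ ∀ j ∈ p.parts, j ∈ s) univ →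
    ℕ →₀ ℕ := fun p _ => {
      toFun := fun i => Multiset.count i p.parts • i
      support := Finset.filter (fun i => i ≠ 0) p.parts.toFinset
      mem_support_toFun := fun a => by
        simp only [smul_eq_mul, ne_eq, mul_eq_zero, Multiset.count_eq_zero]
        rw [not_or, not_not]
        simp only [Multiset.mem_toFinset, not_not, mem_filter] }
  refine Finset.card_bij φ ?_ ?_ ?_
  · intro a ha
    simp only [φ, not_forall, not_exists, not_and, exists_prop, mem_filter]
    rw [mem_finsuppAntidiag]
    dsimp only [ne_eq, smul_eq_mul, id_eq, eq_mpr_eq_cast, le_eq_subset, Finsupp.coe_mk]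
    simp only [mem_univ, forall_true_left, not_and, not_forall, exists_prop,
      mem_filter, true_and] at ha
    refine ⟨⟨?_, fun i ↦ ?_⟩, fun i _ ↦ ⟨a.parts.count i, ha.1 i, rfl⟩⟩
    · conv_rhs => simp [← a.parts_sum]
      rw [sum_multiset_count_of_subset _ s]
      · simp only [smul_eq_mul]
      · intro i
        simp only [Multiset.mem_toFinset, not_not, mem_filter]
        apply ha.2
    · simp only [ne_eq, Multiset.mem_toFinset, not_not, mem_filter, and_imp]
      exact fun hi _ ↦ ha.2 i hi
  · intro p₁ hp₁ p₂ hp₂ h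
    apply Nat.Partition.ext
    simp only [true_and, mem_univ, mem_filter] at hp₁ hp₂
    ext i
    simp only [φ, ne_eq, Multiset.mem_toFinset, not_not, smul_eq_mul, Finsupp.mk.injEq] at h
    by_cases hi : i = 0
    · rw [hi]
      rw [Multiset.count_eq_zero_of_notMem]
      · rw [Multiset.count_eq_zero_of_notMem]
        intro a; exact Nat.lt_irrefl 0 (hs 0 (hp₂.2 0 a))
      intro a; exact Nat.lt_irrefl 0 (hs 0 (hp₁.2 0 a))
    · rw [← mul_left_inj' hi]
      rw [funext_iff] at h
      exact h.2 i
  · simp only [φ, mem_filter, mem_finsuppAntidiag, mem_univ, exists_prop, true_and, and_assoc]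
    rintro f ⟨hf, hf₃, hf₄⟩
    have hf' : f ∈ finsuppAntidiag s n := mem_finsuppAntidiag.mpr ⟨hf, hf₃⟩
    simp only [mem_finsuppAntidiag] at hf'
    refine ⟨⟨∑ i ∈ s, Multiset.replicate (f i / i) i, ?_, ?_⟩, ?_, ?_, ?_⟩
    · intro i hi
      simp only [exists_prop, Multiset.mem_sum, mem_map, Function.Embedding.coeFn_mk] at hi
      rcases hi with ⟨t, ht, z⟩
      apply hs
      rwa [Multiset.eq_of_mem_replicate z]
    · simp_rw [Multiset.sum_sum, Multiset.sum_replicate, Nat.nsmul_eq_mul]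
      rw [← hf'.1]
      refine sum_congr rfl fun i hi => Nat.div_mul_cancel ?_
      rcases hf₄ i hi with ⟨w, _, hw₂⟩
      rw [← hw₂]
      exact dvd_mul_left _ _
    · intro i
      simp_rw [Multiset.count_sum', Multiset.count_replicate, sum_ite_eq']
      split_ifs with h
      · rcases hf₄ i h with ⟨w, hw₁, hw₂⟩
        rwa [← hw₂, Nat.mul_div_cancel _ (hs i h)]
      · exact hc _ h
    · intro i hi
      rw [Multiset.mem_sum] at hi
      rcases hi with ⟨j, hj₁, hj₂⟩
      rwa [Multiset.eq_of_mem_replicate hj₂]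
    · ext i
      simp_rw [Multiset.count_sum', Multiset.count_replicate, sum_ite_eq']
      simp only [ne_eq, Multiset.mem_toFinset, not_not, smul_eq_mul, ite_mul,
        zero_mul, Finsupp.coe_mk]
      split_ifs with h
      · apply Nat.div_mul_cancel
        rcases hf₄ i h with ⟨w, _, hw₂⟩
        apply Dvd.intro_left _ hw₂
      · apply symm
        rw [← Finsupp.notMem_support_iff]
        exact notMem_mono hf'.2 h

/-- Inverse of a product with invertible factors is the product of inverses. -/
theorem prod_inv {k : Type*} [Field k] {ι : Type*} (s : Finset ι) (f : ι → PowerSeries k)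
    (hf : ∀ i ∈ s, PowerSeries.constantCoeff (R := k) (f i) ≠ 0) :
    (∏ i ∈ s, f i)⁻¹ = ∏ i ∈ s, (f i)⁻¹ := by
  have h : PowerSeries.constantCoeff (R := k) (∏ i ∈ s, f i) ≠ 0 := by
    rw [map_prod]
    exact Finset.prod_ne_zero_iff.2 hf
  rw [eq_comm, PowerSeries.eq_inv_iff_mul_eq_one h, ← Finset.prod_mul_distrib,
    Finset.prod_congr rfl fun i hi => PowerSeries.inv_mul_cancel (f i) (hf i hi)]
  exact Finset.prod_const_one

/-- The indicator series of the positive multiples of `m + 1`. -/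
theorem indicator_pos_mul (k : Type*) [Field k] (m : ℕ) :
    indicatorSeries k ((· * (m + 1)) '' {k | 1 ≤ k}) =
      X ^ (m + 1) * (1 - (X : PowerSeries k) ^ (m + 1))⁻¹ := by
  rw [num_series']
  ext n
  rw [coeff_indicator, PowerSeries.coeff_X_pow_mul', coeff_indicator]
  have hiff : (n ∈ (· * (m + 1)) '' {k | 1 ≤ k}) ↔
      (m + 1 ≤ n ∧ n - (m + 1) ∈ {k | (m + 1) ∣ k}) := by
    simp only [Set.mem_image, Set.mem_setOf_eq]
    constructor
    · rintro ⟨a, ha, rfl⟩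
      obtain ⟨b, rfl⟩ : ∃ b, a = b + 1 := ⟨a - 1, by omega⟩
      exact ⟨le_mul_of_one_le_left (Nat.zero_le _) ha,
        ⟨b, by rw [add_mul, one_mul, Nat.add_sub_cancel, mul_comm]⟩⟩
    · rintro ⟨h1, b, hb⟩
      refine ⟨b + 1, by simp, ?_⟩
      have hn : n = (m + 1) * b + (m + 1) := by rw [← hb, Nat.sub_add_cancel h1]
      rw [hn]; ring
  by_cases h1 : m + 1 ≤ n
  · rw [if_pos h1]
    by_cases h2 : n - (m + 1) ∈ {k | (m + 1) ∣ k}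
    · rw [if_pos h2, if_pos (hiff.2 ⟨h1, h2⟩)]
    · rw [if_neg h2, if_neg (fun hx => h2 (hiff.1 hx).2)]
  · rw [if_neg h1, if_neg (fun hx => h1 (hiff.1 hx).1)]

theorem indicator_single_mul (k : Type*) [Field k] (m : ℕ) :
    indicatorSeries k ((· * m) '' {1}) = (X : PowerSeries k) ^ m := by
  ext n
  rw [coeff_indicator, PowerSeries.coeff_X_pow]
  refine if_congr ?_ rfl rfl
  simp [eq_comm]

end

end Stmt3Aux

open Finset PowerSeries Stmt3Aux in
theorem stmt3 (r N n : ℕ) (h : r ≤ N) :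
    PowerSeries.coeff (R := ℚ) n
        ((PowerSeries.X : PowerSeries ℚ) ^ (N * (N + 1) / 2) *
          (∏ i ∈ Finset.range r, (1 - (PowerSeries.X : PowerSeries ℚ) ^ (i + 1)))⁻¹) =
      prN r N n := by
  classical
  set c : ℕ → Set ℕ := fun i =>
    if 1 ≤ i ∧ i ≤ r then {k | 1 ≤ k} else if 1 ≤ i ∧ i ≤ N then {1} else Set.univ with hc_def
  have key := partialGF_prop ℚ n (Finset.Icc 1 N) (fun i hi => (Finset.mem_Icc.1 hi).1) c
    (fun i hi => by
      rw [Finset.mem_Icc, not_and_or, not_le, not_le] at hi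
      simp only [hc_def]
      rw [if_neg (by omega), if_neg (by omega)]
      trivial)
  have hdisj : Disjoint (Finset.Icc 1 r) (Finset.Icc (r + 1) N) := by
    rw [Finset.disjoint_left]
    intro a ha hb
    rw [Finset.mem_Icc] at ha hb
    omega
  have hsplit : Finset.Icc 1 N = Finset.Icc 1 r ∪ Finset.Icc (r + 1) N := by
    ext x
    simp only [Finset.mem_Icc, Finset.mem_union]
    omega
  -- Step 1: the series side
  have series_eq : (∏ i ∈ Finset.Icc 1 N, indicatorSeries ℚ ((· * i) '' c i)) =
      (PowerSeries.X : PowerSeries ℚ) ^ (N * (N + 1) / 2) *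
        (∏ i ∈ Finset.range r, (1 - (PowerSeries.X : PowerSeries ℚ) ^ (i + 1)))⁻¹ := by
    rw [hsplit, Finset.prod_union hdisj]
    have h1 : ∀ i ∈ Finset.Icc 1 r, indicatorSeries ℚ ((· * i) '' c i) =
        (X : PowerSeries ℚ) ^ i * (1 - (X : PowerSeries ℚ) ^ i)⁻¹ := by
      intro i hi
      rw [Finset.mem_Icc] at hi
      have hci : c i = {k | 1 ≤ k} := by simp only [hc_def]; exact if_pos ⟨hi.1, hi.2⟩
      rw [hci]
      obtain ⟨m, rfl⟩ : ∃ m, i = m + 1 := ⟨i - 1, by omega⟩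
      exact indicator_pos_mul ℚ m
    have h2 : ∀ i ∈ Finset.Icc (r + 1) N, indicatorSeries ℚ ((· * i) '' c i) =
        (X : PowerSeries ℚ) ^ i := by
      intro i hi
      rw [Finset.mem_Icc] at hi
      have hci : c i = {1} := by
        simp only [hc_def]; rw [if_neg (by omega), if_pos ⟨by omega, hi.2⟩]
      rw [hci]
      exact indicator_single_mul ℚ i
    rw [Finset.prod_congr rfl h1, Finset.prod_congr rfl h2, Finset.prod_mul_distrib,
      Finset.prod_pow_eq_pow_sum, Finset.prod_pow_eq_pow_sum]
    have hsum : (∑ i ∈ Finset.Icc 1 r, i) + (∑ i ∈ Finset.Icc (r + 1) N, i) =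
        N * (N + 1) / 2 := by
      rw [← Finset.sum_union hdisj, ← hsplit]
      have h0 : ∑ i ∈ Finset.range (N + 1), i = ∑ i ∈ Finset.Ico 1 (N + 1), i := by
        rw [Finset.range_eq_Ico, Finset.sum_eq_sum_Ico_succ_bot (Nat.succ_pos N)]
        simp
      rw [← Finset.Ico_add_one_right_eq_Icc, ← h0, Finset.sum_range_id, Nat.succ_sub_one, Nat.mul_comm]
    have hinv : (∏ i ∈ Finset.Icc 1 r, (1 - (X : PowerSeries ℚ) ^ i)⁻¹) =
        (∏ i ∈ Finset.range r, (1 - (PowerSeries.X : PowerSeries ℚ) ^ (i + 1)))⁻¹ := by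
      rw [prod_inv (Finset.range r) _ (fun i _ => by simp [zero_pow]), ← Finset.Ico_add_one_right_eq_Icc,
        Finset.prod_Ico_eq_prod_range]
      simp only [Nat.add_sub_cancel, Nat.succ_sub_one]
      exact Finset.prod_congr rfl fun i _ => by rw [add_comm]
    rw [hinv, mul_right_comm, ← pow_add, hsum]
  -- Step 2: the counting side
  have count_eq :
      #{p : n.Partition | (∀ j, p.parts.count j ∈ c j) ∧ ∀ j ∈ p.parts, j ∈ Finset.Icc 1 N} =
        prN r N n := by
    rw [prN, Nat.card_eq_fintype_card, Fintype.card_subtype]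
    congr 1
    ext p
    simp only [Finset.mem_filter, Finset.mem_univ, true_and]
    constructor
    · rintro ⟨hA1, hA2⟩
      refine ⟨fun x hx => (Finset.mem_Icc.1 (hA2 x hx)).2, fun x hx1 hx2 => ?_,
        fun _ x hx1 hx2 => ?_⟩
      · have hx := hA1 x
        simp only [hc_def] at hx
        rw [if_pos ⟨hx1, hx2⟩] at hx
        exact Multiset.count_pos.1 hx
      · have hx := hA1 x
        simp only [hc_def] at hx
        rw [if_neg (by omega), if_pos ⟨by omega, hx2⟩] at hx
        exact hx
    · rintro ⟨hp1, hp2, hp3⟩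
      refine ⟨fun j => ?_, fun j hj => Finset.mem_Icc.2 ⟨p.parts_pos hj, hp1 j hj⟩⟩
      simp only [hc_def]
      split_ifs with ha hb
      · exact Multiset.count_pos.2 (hp2 j ha.1 ha.2)
      · exact Set.mem_singleton_iff.2 (hp3 (by omega) j (by omega) hb.2)
      · trivial
  rw [← series_eq, ← key, count_eq]
end

section
/- Let q ∈ ℂ with 0 < |q| < 1, let N ∈ ℕ, let a ∈ ℂ, and let b ∈ ℂ with 0 < |b| ≤ 1 such that (aq/b; q)_{N+1} ≠ 0 and b ≠ q^{-m} for all m ≥ 0. Then b^{N+1} ∑_{n≥0} ((aq;q)_n/(bq;q)_n) q^{(N+1)n} = ((1-b)/(1-q^{N+1})) · ((q;q)_{N+1}/((aq/b);q)_{N+1}) · ( (aq;q)_∞/(b;q)_∞ − ∑_{n=0}^{N} ((aq/b;q)_n b^n)/(q;q)_n ), where in the case b = 1 the expression (1-b)·(aq;q)_∞/(b;q)_∞ is interpreted as (aq;q)_∞/(q;q)_∞. -/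
open Finset Filter Topology

namespace QAux


lemma gs {r : ℝ} (h0 : 0 ≤ r) (h1 : r < 1) (n : ℕ) :
    ∑ i ∈ range n, r ^ i ≤ (1 - r)⁻¹ := by
  have := Summable.sum_le_tsum (range n) (fun i _ => pow_nonneg h0 i)
    (summable_geometric_of_lt_one h0 h1)
  rwa [tsum_geometric_of_lt_one h0 h1] at this

lemma norm_prod_le_exp (f : ℕ → ℂ) (t : ℕ → ℝ) (h : ∀ i, ‖f i‖ ≤ 1 + t i)
    (ht : ∀ i, 0 ≤ t i) (n : ℕ) :
    ‖∏ i ∈ range n, f i‖ ≤ Real.exp (∑ i ∈ range n, t i) := by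
  calc ‖∏ i ∈ range n, f i‖ = ∏ i ∈ range n, ‖f i‖ := by
        rw [norm_prod]
    _ ≤ ∏ i ∈ range n, Real.exp (t i) := by
        apply Finset.prod_le_prod (fun i _ => norm_nonneg _)
        intro i _
        exact (h i).trans (by linarith [Real.add_one_le_exp (t i)])
    _ = Real.exp (∑ i ∈ range n, t i) := by rw [Real.exp_sum]

lemma norm_prod_sub_one_le (w : ℕ → ℂ) (t : ℕ → ℝ) (h : ∀ i, ‖w i‖ ≤ t i)
    (ht : ∀ i, 0 ≤ t i) (n : ℕ) :
    ‖(∏ i ∈ range n, (1 + w i)) - 1‖ ≤ Real.exp (∑ i ∈ range n, t i) - 1 := by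
  induction n with
  | zero => simp
  | succ n ih =>
    rw [prod_range_succ, sum_range_succ]
    have hb : ‖(1 : ℂ) + w n‖ ≤ 1 + t n := by
      calc ‖(1:ℂ) + w n‖ ≤ ‖(1:ℂ)‖ + ‖w n‖ := norm_add_le _ _
        _ ≤ 1 + t n := by rw [norm_one]; exact add_le_add le_rfl (h n)
    have key : (∏ i ∈ range n, (1 + w i)) * (1 + w n) - 1
        = ((∏ i ∈ range n, (1 + w i)) - 1) * (1 + w n) + w n := by ring
    rw [key]
    have hS : (0:ℝ) ≤ ∑ i ∈ range n, t i := Finset.sum_nonneg (fun i _ => ht i)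
    have h7 : (1:ℝ) ≤ Real.exp (∑ i ∈ range n, t i) := by
      have := Real.add_one_le_exp (∑ i ∈ range n, t i); linarith
    have hE : (0:ℝ) ≤ Real.exp (∑ i ∈ range n, t i) - 1 := by linarith
    calc ‖((∏ i ∈ range n, (1 + w i)) - 1) * (1 + w n) + w n‖
        ≤ ‖((∏ i ∈ range n, (1 + w i)) - 1)‖ * ‖(1:ℂ) + w n‖ + ‖w n‖ := by
          refine (norm_add_le _ _).trans ?_
          rw [norm_mul]
      _ ≤ (Real.exp (∑ i ∈ range n, t i) - 1) * (1 + t n) + t n := by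
          have h1 := ih
          have h2 := h n
          have h3 : (0:ℝ) ≤ 1 + t n := by linarith [ht n]
          nlinarith [norm_nonneg ((∏ i ∈ range n, (1 + w i)) - 1), norm_nonneg (w n)]
      _ ≤ Real.exp (∑ i ∈ range n, t i + t n) - 1 := by
          rw [Real.exp_add]
          have h4 := Real.add_one_le_exp (t n)
          have h5 := Real.exp_pos (∑ i ∈ range n, t i)
          have h6 : Real.exp (∑ i ∈ range n, t i) * (t n + 1) ≤
              Real.exp (∑ i ∈ range n, t i) * Real.exp (t n) :=
            mul_le_mul_of_nonneg_left h4 (le_of_lt h5)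
          nlinarith [h6, h7, ht n]


lemma exp_half_lt_two : Real.exp 2⁻¹ < 2 := by
  have h1 : Real.exp 2⁻¹ * Real.exp 2⁻¹ = Real.exp 1 := by
    rw [← Real.exp_add]; norm_num
  have h2 := Real.exp_one_lt_d9
  nlinarith [Real.exp_pos (2⁻¹ : ℝ)]

lemma exists_Kq {q : ℂ} (hq : ‖q‖ < 1) :
    ∃ K : ℝ, 0 < K ∧ K ≤ 1 ∧
      ∀ c : ℂ, ‖c‖ ≤ 1 → ∀ n, K ≤ ‖∏ i ∈ range n, (1 - c * q ^ (i + 1))‖ := by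
  have hq0 : (0:ℝ) ≤ ‖q‖ := norm_nonneg q
  -- choose M
  obtain ⟨M, hM⟩ : ∃ M : ℕ, ‖q‖ ^ M ≤ (1 - ‖q‖) / 2 := by
    have ht := tendsto_pow_atTop_nhds_zero_of_lt_one hq0 hq
    have hpos : (0:ℝ) < (1 - ‖q‖) / 2 := by linarith
    rcases (ht.eventually (eventually_le_nhds hpos)).exists with ⟨M, hM⟩
    exact ⟨M, hM⟩
  set β : ℝ := ∏ i ∈ range M, (1 - ‖q‖ ^ (i + 1)) with hβdef
  have hfac : ∀ i : ℕ, (0:ℝ) < 1 - ‖q‖ ^ (i + 1) := by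
    intro i
    have : ‖q‖ ^ (i + 1) < 1 := pow_lt_one₀ hq0 hq (Nat.succ_ne_zero i)
    linarith
  have hβ : 0 < β := Finset.prod_pos (fun i _ => hfac i)
  have hβ1 : β ≤ 1 := by
    apply Finset.prod_le_one (fun i _ => le_of_lt (hfac i))
    intro i _
    nlinarith [pow_nonneg hq0 (i + 1)]
  set c2 : ℝ := 2 - Real.exp 2⁻¹ with hc2def
  have hc2 : 0 < c2 := by have := exp_half_lt_two; simp only [hc2def]; linarith
  have hc21 : c2 ≤ 1 := by
    have : (1:ℝ) ≤ Real.exp 2⁻¹ := Real.one_le_exp (by norm_num)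
    simp only [hc2def]; linarith
  refine ⟨β * c2, mul_pos hβ hc2, by nlinarith, ?_⟩
  intro c hc n
  -- real lower bound for prefixes
  have low : ∀ m : ℕ, ∏ i ∈ range m, (1 - ‖q‖ ^ (i + 1))
      ≤ ‖∏ i ∈ range m, (1 - c * q ^ (i + 1))‖ := by
    intro m
    rw [norm_prod]
    apply Finset.prod_le_prod (fun i _ => le_of_lt (hfac i))
    intro i _
    have h1 : ‖c * q ^ (i + 1)‖ ≤ ‖q‖ ^ (i + 1) := by
      rw [norm_mul, norm_pow]
      exact mul_le_of_le_one_left (pow_nonneg hq0 _) hc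
    calc 1 - ‖q‖ ^ (i + 1) ≤ 1 - ‖c * q ^ (i + 1)‖ := by linarith
      _ = ‖(1:ℂ)‖ - ‖c * q ^ (i + 1)‖ := by rw [norm_one]
      _ ≤ ‖1 - c * q ^ (i + 1)‖ := norm_sub_norm_le _ _
  rcases le_or_gt n M with hnM | hnM
  · -- n ≤ M : bound by β directly
    have hβn : β ≤ ∏ i ∈ range n, (1 - ‖q‖ ^ (i + 1)) := by
      have hsplit : M = n + (M - n) := by omega
      rw [hβdef, hsplit, Finset.prod_range_add]
      have h2 : ∏ i ∈ range (M - n), (1 - ‖q‖ ^ (n + i + 1)) ≤ 1 := by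
        apply Finset.prod_le_one (fun i _ => le_of_lt (hfac _))
        intro i _; nlinarith [pow_nonneg hq0 (n + i + 1)]
      have h3 : (0:ℝ) ≤ ∏ i ∈ range n, (1 - ‖q‖ ^ (i + 1)) :=
        Finset.prod_nonneg (fun i _ => le_of_lt (hfac i))
      nlinarith
    calc β * c2 ≤ β := by nlinarith
      _ ≤ ∏ i ∈ range n, (1 - ‖q‖ ^ (i + 1)) := hβn
      _ ≤ _ := low n
  · -- n > M : split
    obtain ⟨k, rfl⟩ : ∃ k, n = M + k := ⟨n - M, by omega⟩
    rw [Finset.prod_range_add, norm_mul]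
    have hfront : β ≤ ‖∏ i ∈ range M, (1 - c * q ^ (i + 1))‖ := low M
    have htail : c2 ≤ ‖∏ i ∈ range k, (1 - c * q ^ (M + i + 1))‖ := by
      have hw : ∀ i, ‖-(c * q ^ (M + i + 1))‖ ≤ ‖q‖ ^ (M + i + 1) := by
        intro i
        rw [norm_neg, norm_mul, norm_pow]
        exact mul_le_of_le_one_left (pow_nonneg hq0 _) hc
      have hsum : ∑ i ∈ range k, ‖q‖ ^ (M + i + 1) ≤ 2⁻¹ := by
        have h1 : ∀ i, ‖q‖ ^ (M + i + 1) = ‖q‖ ^ (M + 1) * ‖q‖ ^ i := by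
          intro i; rw [← pow_add]; ring_nf
        calc ∑ i ∈ range k, ‖q‖ ^ (M + i + 1)
            = ‖q‖ ^ (M + 1) * ∑ i ∈ range k, ‖q‖ ^ i := by
              rw [Finset.mul_sum]; exact Finset.sum_congr rfl (fun i _ => h1 i)
          _ ≤ ‖q‖ ^ (M + 1) * (1 - ‖q‖)⁻¹ := by
              apply mul_le_mul_of_nonneg_left (gs hq0 hq k) (pow_nonneg hq0 _)
          _ ≤ 2⁻¹ := by
              have h2 : ‖q‖ ^ (M + 1) ≤ (1 - ‖q‖) / 2 := by
                calc ‖q‖ ^ (M + 1) ≤ ‖q‖ ^ M := by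
                      apply pow_le_pow_of_le_one hq0 (le_of_lt hq); omega
                  _ ≤ (1 - ‖q‖) / 2 := hM
              have h3 : (0:ℝ) < 1 - ‖q‖ := by linarith
              rw [← le_div_iff₀ (by positivity : (0:ℝ) < (1 - ‖q‖)⁻¹)] at *
              · calc ‖q‖ ^ (M + 1) ≤ (1 - ‖q‖) / 2 := h2
                  _ = 2⁻¹ / (1 - ‖q‖)⁻¹ := by field_simp
      have hb1 := norm_prod_sub_one_le (fun i => -(c * q ^ (M + i + 1)))
        (fun i => ‖q‖ ^ (M + i + 1)) hw (fun i => pow_nonneg hq0 _) k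
      have heq : ∏ i ∈ range k, (1 + -(c * q ^ (M + i + 1)))
          = ∏ i ∈ range k, (1 - c * q ^ (M + i + 1)) := by
        apply Finset.prod_congr rfl; intro i _; ring
      rw [heq] at hb1
      have h4 : Real.exp (∑ i ∈ range k, ‖q‖ ^ (M + i + 1)) - 1 ≤ Real.exp 2⁻¹ - 1 := by
        have := Real.exp_le_exp.mpr hsum; linarith
      have h5 : ‖(∏ i ∈ range k, (1 - c * q ^ (M + i + 1))) - 1‖ ≤ Real.exp 2⁻¹ - 1 :=
        le_trans hb1 h4
      have h6 : (1:ℝ) - ‖(∏ i ∈ range k, (1 - c * q ^ (M + i + 1))) - 1‖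
          ≤ ‖∏ i ∈ range k, (1 - c * q ^ (M + i + 1))‖ := by
        have h7 := norm_sub_norm_le (∏ i ∈ range k, (1 - c * q ^ (M + i + 1))) 1
        have h8 := norm_sub_norm_le (1:ℂ) (∏ i ∈ range k, (1 - c * q ^ (M + i + 1)))
        rw [norm_one] at h8
        rw [norm_sub_rev] at h8
        linarith
      simp only [hc2def]; linarith
    calc β * c2 ≤ ‖∏ i ∈ range M, (1 - c * q ^ (i + 1))‖
          * ‖∏ i ∈ range k, (1 - c * q ^ (M + i + 1))‖ := by
          apply mul_le_mul hfront htail (le_of_lt hc2) (norm_nonneg _)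
      _ = _ := rfl



lemma hasProd_zero_of_exists_zero {f : ℕ → ℂ} (i0 : ℕ) (h : f i0 = 0) : HasProd f 0 := by
  have hev : ∀ᶠ s : Finset ℕ in atTop, ∏ i ∈ s, f i = 0 := by
    filter_upwards [Filter.eventually_ge_atTop ({i0} : Finset ℕ)] with s hs
    exact Finset.prod_eq_zero (hs (Finset.mem_singleton_self i0)) h
  exact Tendsto.congr' (EventuallyEq.symm hev) tendsto_const_nhds

lemma tendsto_qPoch {q : ℂ} (hq : ‖q‖ < 1) (w : ℂ) :
    Tendsto (fun n => qPoch q w n) atTop (𝓝 (qPochInf q w)) := by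
  have hq0 : (0:ℝ) ≤ ‖q‖ := norm_nonneg q
  by_cases h0 : ∀ i : ℕ, (1 - w * q ^ i) ≠ 0
  · obtain ⟨M, hM⟩ : ∃ M : ℕ, ‖w‖ * ‖q‖ ^ M ≤ 2⁻¹ := by
      have ht := tendsto_pow_atTop_nhds_zero_of_lt_one hq0 hq
      have ht2 := ht.const_mul ‖w‖
      rw [mul_zero] at ht2
      rcases (ht2.eventually (eventually_le_nhds (by norm_num : (0:ℝ) < 2⁻¹))).exists
        with ⟨M, hM⟩
      exact ⟨M, hM⟩
    have hsl : Summable (fun i : ℕ => Complex.log (1 - w * q ^ i)) := by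
      rw [← summable_nat_add_iff M]
      apply Summable.of_norm_bounded
        (g := fun i => 3/2 * (‖w‖ * ‖q‖ ^ M) * ‖q‖ ^ i)
        (((summable_geometric_of_lt_one hq0 hq).mul_left _))
      intro i
      have hsmall : ‖-(w * q ^ (i + M))‖ ≤ 2⁻¹ := by
        rw [norm_neg, norm_mul, norm_pow, pow_add]
        calc ‖w‖ * (‖q‖ ^ i * ‖q‖ ^ M) = (‖w‖ * ‖q‖ ^ M) * ‖q‖ ^ i := by ring
          _ ≤ 2⁻¹ * 1 := by
            apply mul_le_mul hM (pow_le_one₀ hq0 (le_of_lt hq))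
              (pow_nonneg hq0 _) (by norm_num)
          _ = 2⁻¹ := by norm_num
      have h1 : (1 : ℂ) - w * q ^ (i + M) = 1 + -(w * q ^ (i + M)) := by ring
      rw [h1]
      calc ‖Complex.log (1 + -(w * q ^ (i + M)))‖ ≤ 3/2 * ‖-(w * q ^ (i + M))‖ :=
            Complex.norm_log_one_add_half_le_self (by simpa using hsmall)
        _ ≤ 3/2 * (‖w‖ * ‖q‖ ^ M) * ‖q‖ ^ i := by
            rw [norm_neg, norm_mul, norm_pow, pow_add]
            nlinarith [norm_nonneg w, pow_nonneg hq0 i, pow_nonneg hq0 M]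
    have hm : Multipliable (fun i : ℕ => 1 - w * q ^ i) := by
      have := Complex.multipliable_of_summable_log hsl
      exact this
    exact hm.hasProd.tendsto_prod_nat
  · push_neg at h0
    obtain ⟨i0, hi0⟩ := h0
    have h1 : qPochInf q w = 0 := (hasProd_zero_of_exists_zero i0 hi0).tprod_eq
    rw [h1]
    apply Tendsto.congr' _ tendsto_const_nhds
    filter_upwards [eventually_ge_atTop (i0 + 1)] with n hn
    exact (Finset.prod_eq_zero (Finset.mem_range.mpr (by omega)) hi0).symm

lemma qPochInf_split {q : ℂ} (hq : ‖q‖ < 1) (w : ℂ) :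
    qPochInf q w = (1 - w) * qPochInf q (w * q) := by
  have h1 := tendsto_qPoch hq w
  have key : ∀ n, qPoch q w (n + 1) = (1 - w) * qPoch q (w * q) n := by
    intro n
    rw [qPoch, qPoch, Finset.prod_range_succ']
    simp only [pow_zero, mul_one]
    rw [mul_comm]
    congr 1
    apply Finset.prod_congr rfl; intro i _; ring_nf
  have h3 : Tendsto (fun n => qPoch q w (n + 1)) atTop (𝓝 (qPochInf q w)) :=
    h1.comp (tendsto_add_atTop_nat 1)
  have h4 : Tendsto (fun n => (1 - w) * qPoch q (w * q) n) atTop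
      (𝓝 ((1 - w) * qPochInf q (w * q))) := (tendsto_qPoch hq (w * q)).const_mul _
  exact tendsto_nhds_unique (h3.congr key) h4


end QAux
section Part4
open Finset Filter Topology QAux

noncomputable def Kq (q : ℂ) : ℝ :=
  if h : ‖q‖ < 1 then (exists_Kq h).choose else 1

lemma Kq_spec {q : ℂ} (hq : ‖q‖ < 1) :
    0 < Kq q ∧ Kq q ≤ 1 ∧
      ∀ c : ℂ, ‖c‖ ≤ 1 → ∀ n, Kq q ≤ ‖∏ i ∈ Finset.range n, (1 - c * q ^ (i + 1))‖ := by
  rw [Kq, dif_pos hq]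
  exact (exists_Kq hq).choose_spec

noncomputable def Pp (q a x : ℂ) (k : ℕ) : ℂ := ∏ i ∈ range k, (x - a * q ^ (i + 1))

noncomputable def cf (q a b : ℂ) (n : ℕ) : ℂ := qPoch q (a * q) n / qPoch q (b * q) n

noncomputable def gf (q a b z : ℂ) : ℂ := ∑' n : ℕ, cf q a b n * z ^ n

noncomputable def Hf (q a x : ℂ) : ℂ :=
  1 + ∑' k : ℕ, q ^ (k + 1) * (x - a) * Pp q a x k / qPoch q q (k + 1)

def Smn (m : ℕ) : ℕ := ∑ i ∈ range m, (i + 1)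

noncomputable def Phi (q a x : ℂ) : ℂ := ∑' m : ℕ, (-x) ^ m * q ^ Smn m / qPoch q q m

lemma qPoch_zero (q w : ℂ) : qPoch q w 0 = 1 := by simp [qPoch]

lemma qPoch_succ (q w : ℂ) (n : ℕ) :
    qPoch q w (n + 1) = qPoch q w n * (1 - w * q ^ n) := Finset.prod_range_succ _ _

lemma Pp_zero (q a x : ℂ) : Pp q a x 0 = 1 := by simp [Pp]

lemma Pp_succ (q a x : ℂ) (k : ℕ) :
    Pp q a x (k + 1) = Pp q a x k * (x - a * q ^ (k + 1)) := Finset.prod_range_succ _ _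

lemma Pp_shift (q a x : ℂ) (k : ℕ) :
    Pp q a (q * x) (k + 1) = q ^ (k + 1) * ((x - a) * Pp q a x k) := by
  have h1 : Pp q a (q * x) (k + 1) = ∏ i ∈ range (k + 1), (q * (x - a * q ^ i)) := by
    rw [Pp]; apply Finset.prod_congr rfl; intro i _; ring
  have h2 : ∏ i ∈ range (k + 1), (x - a * q ^ i) = (x - a) * Pp q a x k := by
    rw [Finset.prod_range_succ', Pp]
    simp only [pow_zero, mul_one]
    rw [mul_comm]
  rw [h1, Finset.prod_mul_distrib, Finset.prod_const, Finset.card_range, h2]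

lemma Smn_succ (m : ℕ) : Smn (m + 1) = Smn m + (m + 1) := Finset.sum_range_succ _ _

-- Pp at 0
lemma Pp_at_zero (q a : ℂ) (k : ℕ) : Pp q a 0 k = (-a) ^ k * q ^ Smn k := by
  induction k with
  | zero => simp [Pp_zero, Smn]
  | succ k ih =>
    rw [Pp_succ, ih, Smn_succ, pow_add, pow_add]
    ring

-- Pp vs qPoch (a*q/b)
lemma Pp_eq_qPoch (q a b : ℂ) (hb : b ≠ 0) (k : ℕ) :
    Pp q a b k = b ^ k * qPoch q (a * q / b) k := by
  induction k with
  | zero => simp [Pp_zero, qPoch_zero]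
  | succ k ih =>
    rw [Pp_succ, qPoch_succ, ih, pow_succ]
    field_simp
    ring

section Bounds

variable {q : ℂ}

lemma norm_qPoch_le (hq : ‖q‖ < 1) (w : ℂ) (n : ℕ) :
    ‖qPoch q w n‖ ≤ Real.exp (‖w‖ * (1 - ‖q‖)⁻¹) := by
  have h1 := norm_prod_le_exp (fun i => 1 - w * q ^ i) (fun i => ‖w‖ * ‖q‖ ^ i)
    (fun i => by
      calc ‖1 - w * q ^ i‖ ≤ ‖(1:ℂ)‖ + ‖w * q ^ i‖ := norm_sub_le _ _
        _ = 1 + ‖w‖ * ‖q‖ ^ i := by rw [norm_one, norm_mul, norm_pow])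
    (fun i => by positivity) n
  refine h1.trans (Real.exp_le_exp.mpr ?_)
  rw [← Finset.mul_sum]
  exact mul_le_mul_of_nonneg_left (gs (norm_nonneg q) hq n) (norm_nonneg w)

lemma norm_Pp_le (hq : ‖q‖ < 1) (a : ℂ) {x : ℂ} (hx : ‖x‖ ≤ 1) (k : ℕ) :
    ‖Pp q a x k‖ ≤ Real.exp (‖a‖ * (1 - ‖q‖)⁻¹) := by
  have h1 := norm_prod_le_exp (fun i => x - a * q ^ (i + 1)) (fun i => ‖a‖ * ‖q‖ ^ i)
    (fun i => by
      have h2 : ‖q‖ ^ (i + 1) ≤ ‖q‖ ^ i :=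
        pow_le_pow_of_le_one (norm_nonneg q) (le_of_lt hq) (by omega)
      calc ‖x - a * q ^ (i + 1)‖ ≤ ‖x‖ + ‖a * q ^ (i + 1)‖ := norm_sub_le _ _
        _ = ‖x‖ + ‖a‖ * ‖q‖ ^ (i + 1) := by rw [norm_mul, norm_pow]
        _ ≤ 1 + ‖a‖ * ‖q‖ ^ i := by
            have := mul_le_mul_of_nonneg_left h2 (norm_nonneg a)
            linarith)
    (fun i => by positivity) k
  refine h1.trans (Real.exp_le_exp.mpr ?_)
  rw [← Finset.mul_sum]
  exact mul_le_mul_of_nonneg_left (gs (norm_nonneg q) hq k) (norm_nonneg a)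

lemma norm_qPoch_q_ge (hq : ‖q‖ < 1) (n : ℕ) : Kq q ≤ ‖qPoch q q n‖ := by
  have h := (Kq_spec hq).2.2 1 (by norm_num) n
  have he : ∏ i ∈ Finset.range n, (1 - (1:ℂ) * q ^ (i + 1)) = qPoch q q n := by
    rw [qPoch]; apply Finset.prod_congr rfl; intro i _; ring
  rwa [he] at h

lemma qPoch_q_ne_zero (hq : ‖q‖ < 1) (n : ℕ) : qPoch q q n ≠ 0 := by
  have h := norm_qPoch_q_ge hq n
  have h0 := (Kq_spec hq).1
  intro hc
  rw [hc, norm_zero] at h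
  linarith

lemma norm_qPoch_mul_ge (hq : ‖q‖ < 1) {c : ℂ} (hc : ‖c‖ ≤ 1) (n : ℕ) : Kq q ≤ ‖qPoch q (c * q) n‖ := by
  have h := (Kq_spec hq).2.2 c hc n
  have he : ∏ i ∈ Finset.range n, (1 - c * q ^ (i + 1)) = qPoch q (c * q) n := by
    rw [qPoch]; apply Finset.prod_congr rfl; intro i _; ring
  rwa [he] at h

lemma qPoch_mul_ne_zero (hq : ‖q‖ < 1) {c : ℂ} (hc : ‖c‖ ≤ 1) (n : ℕ) : qPoch q (c * q) n ≠ 0 := by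
  have h := norm_qPoch_mul_ge hq hc n
  have h0 := (Kq_spec hq).1
  intro hneq
  rw [hneq, norm_zero] at h
  linarith

lemma summable_geo_bound (hq : ‖q‖ < 1) {f : ℕ → ℂ} {C : ℝ} (h : ∀ n, ‖f n‖ ≤ C * ‖q‖ ^ n) :
    Summable f :=
  Summable.of_norm_bounded ((summable_geometric_of_lt_one (norm_nonneg q) hq).mul_left C) h

end Bounds
end Part4
section Part5
open Finset Filter Topology QAux

variable {q a b : ℂ}

lemma summable_geo_bound' {f : ℕ → ℂ} {C r : ℝ} (h0 : 0 ≤ r) (hr : r < 1)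
    (h : ∀ n, ‖f n‖ ≤ C * r ^ n) : Summable f :=
  Summable.of_norm_bounded ((summable_geometric_of_lt_one h0 hr).mul_left C) h

lemma cf_zero : cf q a b 0 = 1 := by simp [cf, qPoch_zero]

lemma one_sub_b_pow_ne (hq : ‖q‖ < 1) (hb1 : ‖b‖ ≤ 1) (n : ℕ) :
    (1 : ℂ) - b * q ^ (n + 1) ≠ 0 := by
  have h1 : qPoch q (b * q) (n + 1) ≠ 0 := qPoch_mul_ne_zero hq hb1 (n + 1)
  intro hc
  apply h1
  rw [qPoch_succ]
  have : (1 : ℂ) - b * q * q ^ n = 1 - b * q ^ (n + 1) := by ring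
  rw [this, hc, mul_zero]

lemma cf_rec (hq : ‖q‖ < 1) (hb1 : ‖b‖ ≤ 1) (n : ℕ) :
    cf q a b (n + 1) * (1 - b * q ^ (n + 1)) = cf q a b n * (1 - a * q ^ (n + 1)) := by
  have hfac : (1 : ℂ) - b * q ^ (n + 1) ≠ 0 := one_sub_b_pow_ne hq hb1 n
  have h2 : qPoch q (b * q) n ≠ 0 := qPoch_mul_ne_zero hq hb1 n
  rw [cf, cf, qPoch_succ, qPoch_succ]
  have e1 : (1 : ℂ) - a * q * q ^ n = 1 - a * q ^ (n + 1) := by ring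
  have e2 : (1 : ℂ) - b * q * q ^ n = 1 - b * q ^ (n + 1) := by ring
  rw [e1, e2]
  rw [div_mul_eq_mul_div, div_mul_eq_mul_div, div_eq_div_iff (mul_ne_zero h2 hfac) h2]
  ring

lemma norm_cf_le (hq : ‖q‖ < 1) (hb1 : ‖b‖ ≤ 1) (n : ℕ) :
    ‖cf q a b n‖ ≤ Real.exp (‖a * q‖ * (1 - ‖q‖)⁻¹) / Kq q := by
  rw [cf, norm_div]
  exact div_le_div₀ (Real.exp_pos _).le (norm_qPoch_le hq _ n) (Kq_spec hq).1
    (norm_qPoch_mul_ge hq hb1 n)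

lemma summable_cf_mul_pow (hq : ‖q‖ < 1) (hb1 : ‖b‖ ≤ 1) {z : ℂ} (hz : ‖z‖ < 1) :
    Summable (fun n => cf q a b n * z ^ n) := by
  apply summable_geo_bound' (norm_nonneg z) hz
    (C := Real.exp (‖a * q‖ * (1 - ‖q‖)⁻¹) / Kq q)
  intro n
  rw [norm_mul, norm_pow]
  exact mul_le_mul_of_nonneg_right (norm_cf_le hq hb1 n) (pow_nonneg (norm_nonneg z) n)

lemma gf_funeq (hq : ‖q‖ < 1) (hb1 : ‖b‖ ≤ 1) {z : ℂ} (hz : ‖z‖ < 1) :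
    (b - a * q * z) * gf q a b (q * z) - (1 - z) * gf q a b z = b - 1 := by
  have hqz : ‖q * z‖ < 1 := by
    rw [norm_mul]
    nlinarith [norm_nonneg q, norm_nonneg z]
  have Sc : Summable (fun n => cf q a b n * z ^ n) := summable_cf_mul_pow hq hb1 hz
  have Sqz : Summable (fun n => cf q a b n * (q * z) ^ n) := summable_cf_mul_pow hq hb1 hqz
  set F : ℕ → ℂ := fun n => (1 - b * q ^ n) * cf q a b n * z ^ n with hF
  have SF : Summable F := by
    apply (Sc.sub (Sqz.mul_left b)).congr
    intro n
    simp only [hF]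
    ring
  have hsplit := Summable.tsum_eq_zero_add SF
  have hF0 : F 0 = 1 - b := by simp [hF, cf_zero]
  have htsumF : ∑' n, F n = gf q a b z - b * gf q a b (q * z) := by
    have h1 : ∀ n : ℕ, F n = cf q a b n * z ^ n - b * (cf q a b n * (q * z) ^ n) := by
      intro n; simp only [hF]; ring
    rw [tsum_congr h1, Summable.tsum_sub Sc (Sqz.mul_left b), tsum_mul_left]
    rfl
  have htail : ∑' n, F (n + 1)
      = z * gf q a b z - a * q * z * gf q a b (q * z) := by
    have h1 : ∀ n : ℕ, F (n + 1)
        = z * (cf q a b n * z ^ n) - a * q * z * (cf q a b n * (q * z) ^ n) := by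
      intro n
      have hrec := cf_rec (a := a) hq hb1 n
      simp only [hF]
      have expand : z * (cf q a b n * z ^ n) - a * q * z * (cf q a b n * (q * z) ^ n)
          = (1 - a * q ^ (n + 1)) * cf q a b n * z ^ (n + 1) := by ring
      rw [expand]
      linear_combination z ^ (n + 1) * hrec
    rw [tsum_congr h1, Summable.tsum_sub (Sc.mul_left z) (Sqz.mul_left (a * q * z)),
      tsum_mul_left, tsum_mul_left]
    rfl
  rw [htsumF, hF0, htail] at hsplit
  rw [gf, gf] at hsplit ⊢
  linear_combination -hsplit

end Part5
section Part6
open Finset Filter Topology QAux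

variable {q a : ℂ}

lemma one_sub_pow_ne (hq : ‖q‖ < 1) (n : ℕ) : (1 : ℂ) - q ^ (n + 1) ≠ 0 := by
  intro hc
  have h1 : ‖q ^ (n + 1)‖ < 1 := by
    rw [norm_pow]
    exact pow_lt_one₀ (norm_nonneg q) hq (Nat.succ_ne_zero n)
  have h2 : q ^ (n + 1) = 1 := by linear_combination -hc
  rw [h2] at h1
  simp at h1

lemma one_sub_q_ne (hq : ‖q‖ < 1) : (1 : ℂ) - q ≠ 0 := by
  have := one_sub_pow_ne hq 0
  simpa using this

lemma summable_aux (hq : ‖q‖ < 1) {x : ℂ} (hx : ‖x‖ ≤ 1) (c : ℕ → ℂ) (p m : ℕ → ℕ)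
    {Cc : ℝ} (hc : ∀ k, ‖c k‖ ≤ Cc * ‖q‖ ^ k) :
    Summable (fun k => c k * Pp q a x (p k) / qPoch q q (m k)) := by
  have hCc : 0 ≤ Cc := by
    have h := (norm_nonneg (c 0)).trans (hc 0)
    simpa using h
  apply summable_geo_bound hq
    (C := Cc * (Real.exp (‖a‖ * (1 - ‖q‖)⁻¹) / Kq q))
  intro k
  rw [norm_div, norm_mul]
  have h1 : ‖Pp q a x (p k)‖ / ‖qPoch q q (m k)‖
      ≤ Real.exp (‖a‖ * (1 - ‖q‖)⁻¹) / Kq q :=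
    div_le_div₀ (Real.exp_pos _).le (norm_Pp_le hq a hx (p k)) (Kq_spec hq).1
      (norm_qPoch_q_ge hq (m k))
  calc ‖c k‖ * ‖Pp q a x (p k)‖ / ‖qPoch q q (m k)‖
      = ‖c k‖ * (‖Pp q a x (p k)‖ / ‖qPoch q q (m k)‖) := by ring
    _ ≤ (Cc * ‖q‖ ^ k) * (Real.exp (‖a‖ * (1 - ‖q‖)⁻¹) / Kq q) := by
        apply mul_le_mul (hc k) h1 (by positivity) (by positivity)
    _ = Cc * (Real.exp (‖a‖ * (1 - ‖q‖)⁻¹) / Kq q) * ‖q‖ ^ k := by ring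

lemma pow_norm_le (hq : ‖q‖ < 1) {i j : ℕ} (h : i ≤ j) : ‖q‖ ^ j ≤ ‖q‖ ^ i :=
  pow_le_pow_of_le_one (norm_nonneg q) hq.le h

lemma key_C1 (hq : ‖q‖ < 1) {x : ℂ} (hx : ‖x‖ ≤ 1) :
    (1 - q * x) * ∑' k : ℕ, q ^ k * Pp q a x k / qPoch q q (k + 1)
      = 1 / (1 - q) + (q * x - a) * ∑' k : ℕ, q ^ (2 * k + 2) * Pp q a x k / qPoch q q (k + 1 + 1) := by
  have hD : ∀ n, qPoch q q n ≠ 0 := qPoch_q_ne_zero hq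
  have Sw1 : Summable (fun k => q ^ k * Pp q a x k / qPoch q q (k + 1)) :=
    summable_aux hq hx _ _ _ (Cc := 1) (fun k => by rw [norm_pow]; simp)
  have Sw2 : Summable (fun k => q ^ k * Pp q a x k / qPoch q q k) :=
    summable_aux hq hx _ _ _ (Cc := 1) (fun k => by rw [norm_pow]; simp)
  have SA : Summable (fun k => q ^ (k + 1) * Pp q a x (k + 1) / qPoch q q (k + 1)) :=
    summable_aux hq hx _ (fun k => k + 1) _ (Cc := 1)
      (fun k => by rw [norm_pow]; simpa using pow_norm_le hq (Nat.le_succ k))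
  have SB : Summable (fun k => a * q ^ (2 * k + 2) * Pp q a x k / qPoch q q (k + 1)) :=
    summable_aux hq hx _ _ _ (Cc := ‖a‖)
      (fun k => by
        rw [norm_mul, norm_pow]
        exact mul_le_mul_of_nonneg_left (pow_norm_le hq (by omega)) (norm_nonneg a))
  have SDk : Summable (fun k => q ^ (2 * k + 1) * Pp q a x k / qPoch q q (k + 1)) :=
    summable_aux hq hx _ _ _ (Cc := 1)
      (fun k => by rw [norm_pow]; simpa using pow_norm_le hq (by omega))
  have SDk1 : Summable (fun k => q ^ (2 * (k + 1) + 1) * Pp q a x (k + 1) / qPoch q q (k + 1 + 1)) :=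
    summable_aux hq hx _ (fun k => k + 1) (fun k => k + 2) (Cc := 1)
      (fun k => by rw [norm_pow]; simpa using pow_norm_le hq (by omega))
  have SG : Summable (fun k => q ^ (2 * k + 2) * Pp q a x k / qPoch q q (k + 1 + 1)) :=
    summable_aux hq hx _ _ _ (Cc := 1)
      (fun k => by rw [norm_pow]; simpa using pow_norm_le hq (by omega))
  -- step 1 : q*x*w1 = A + B
  have step1 : ∀ k : ℕ, q * x * (q ^ k * Pp q a x k / qPoch q q (k + 1))
      = q ^ (k + 1) * Pp q a x (k + 1) / qPoch q q (k + 1)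
        + a * q ^ (2 * k + 2) * Pp q a x k / qPoch q q (k + 1) := by
    intro k
    rw [Pp_succ]
    ring
  -- step 2
  have step2 : (1 - q * x) * ∑' k : ℕ, q ^ k * Pp q a x k / qPoch q q (k + 1)
      = (∑' k : ℕ, q ^ k * Pp q a x k / qPoch q q (k + 1))
        - ((∑' k : ℕ, q ^ (k + 1) * Pp q a x (k + 1) / qPoch q q (k + 1))
          + ∑' k : ℕ, a * q ^ (2 * k + 2) * Pp q a x k / qPoch q q (k + 1)) := by
    have h2 : q * x * ∑' k : ℕ, q ^ k * Pp q a x k / qPoch q q (k + 1)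
        = ∑' k : ℕ, q * x * (q ^ k * Pp q a x k / qPoch q q (k + 1)) := by
      rw [tsum_mul_left]
    rw [sub_mul, one_mul, h2, tsum_congr step1, Summable.tsum_add SA SB]
  -- step 3 : ∑'A = ∑'w2 - 1
  have step3 : ∑' k : ℕ, q ^ (k + 1) * Pp q a x (k + 1) / qPoch q q (k + 1)
      = (∑' k : ℕ, q ^ k * Pp q a x k / qPoch q q k) - 1 := by
    have h3 := Summable.tsum_eq_zero_add Sw2
    simp only [pow_zero, Pp_zero, qPoch_zero, one_mul, div_one] at h3
    rw [h3]
    ring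
  -- step 4 : w1 - w2 = Dk termwise
  have step4 : ∀ k : ℕ, q ^ k * Pp q a x k / qPoch q q (k + 1)
      - q ^ k * Pp q a x k / qPoch q q k
      = q ^ (2 * k + 1) * Pp q a x k / qPoch q q (k + 1) := by
    intro k
    rw [qPoch_succ]
    have h1 := hD k
    have h2 : (1 : ℂ) - q * q ^ k ≠ 0 := by
      have := one_sub_pow_ne hq k
      intro hc; apply this; rw [← hc]; ring
    rw [div_sub_div _ _ (mul_ne_zero h1 h2) h1,
      div_eq_div_iff (mul_ne_zero (mul_ne_zero h1 h2) h1) (mul_ne_zero h1 h2)]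
    ring
  -- step 5 : shift of Dk
  have hq1 : qPoch q q 1 = 1 - q := by simp [qPoch]
  have step5 : ∑' k : ℕ, q ^ (2 * k + 1) * Pp q a x k / qPoch q q (k + 1)
      = q / (1 - q)
        + ∑' k : ℕ, q ^ (2 * (k + 1) + 1) * Pp q a x (k + 1) / qPoch q q (k + 1 + 1) := by
    have h5 := Summable.tsum_eq_zero_add SDk
    norm_num [Pp_zero, hq1] at h5
    convert h5 using 2
  -- step 6 : Dk (k+1) - B k = (q*x - a) * G k
  have step6 : ∀ k : ℕ, q ^ (2 * (k + 1) + 1) * Pp q a x (k + 1) / qPoch q q (k + 1 + 1)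
      - a * q ^ (2 * k + 2) * Pp q a x k / qPoch q q (k + 1)
      = (q * x - a) * (q ^ (2 * k + 2) * Pp q a x k / qPoch q q (k + 1 + 1)) := by
    intro k
    have e1 : qPoch q q (k + 1 + 1) = qPoch q q (k + 1) * (1 - q * q ^ (k + 1)) :=
      qPoch_succ q q (k + 1)
    have h1 := hD (k + 1)
    have h2 : (1 : ℂ) - q * q ^ (k + 1) ≠ 0 := by
      have := one_sub_pow_ne hq (k + 1)
      intro hc; apply this; rw [← hc]; ring
    rw [Pp_succ, e1]
    rw [div_sub_div _ _ (mul_ne_zero h1 h2) h1, mul_div_assoc',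
      div_eq_div_iff (mul_ne_zero (mul_ne_zero h1 h2) h1) (mul_ne_zero h1 h2)]
    ring
  -- combine
  have comb : ∑' k : ℕ, q ^ (2 * (k + 1) + 1) * Pp q a x (k + 1) / qPoch q q (k + 1 + 1)
      - ∑' k : ℕ, a * q ^ (2 * k + 2) * Pp q a x k / qPoch q q (k + 1)
      = (q * x - a) * ∑' k : ℕ, q ^ (2 * k + 2) * Pp q a x k / qPoch q q (k + 1 + 1) := by
    rw [← Summable.tsum_sub SDk1 SB, tsum_congr step6, tsum_mul_left]
  have hw12 : ∑' k : ℕ, q ^ k * Pp q a x k / qPoch q q (k + 1)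
      - ∑' k : ℕ, q ^ k * Pp q a x k / qPoch q q k
      = ∑' k : ℕ, q ^ (2 * k + 1) * Pp q a x k / qPoch q q (k + 1) := by
    rw [← Summable.tsum_sub Sw1 Sw2, tsum_congr step4]
  have h1q : (1 : ℂ) - q ≠ 0 := one_sub_q_ne hq
  have hfrac : (1 : ℂ) + q / (1 - q) = 1 / (1 - q) := by field_simp; ring
  rw [step2, step3, ← comb]
  linear_combination (hw12.trans step5) + hfrac

end Part6
section Part6b
open Finset Filter Topology QAux

variable {q a : ℂ}

lemma summable_SG (hq : ‖q‖ < 1) {x : ℂ} (hx : ‖x‖ ≤ 1) :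
    Summable (fun k => q ^ (2 * k + 2) * Pp q a x k / qPoch q q (k + 1 + 1)) :=
  summable_aux hq hx _ _ _ (Cc := 1)
    (fun k => by rw [norm_pow]; simpa using pow_norm_le hq (by omega))

lemma summable_SW1 (hq : ‖q‖ < 1) {x : ℂ} (hx : ‖x‖ ≤ 1) :
    Summable (fun k => q ^ k * Pp q a x k / qPoch q q (k + 1)) :=
  summable_aux hq hx _ _ _ (Cc := 1) (fun k => by rw [norm_pow]; simp)

lemma Hf_eq (hq : ‖q‖ < 1) {x : ℂ} (hx : ‖x‖ ≤ 1) :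
    Hf q a x = 1 + (q * (x - a)) * ∑' k : ℕ, q ^ k * Pp q a x k / qPoch q q (k + 1) := by
  rw [Hf]
  congr 1
  have hu : ∀ k : ℕ, q ^ (k + 1) * (x - a) * Pp q a x k / qPoch q q (k + 1)
      = (q * (x - a)) * (q ^ k * Pp q a x k / qPoch q q (k + 1)) := by
    intro k; ring
  rw [tsum_congr hu, tsum_mul_left]

lemma Hf_funeq (hq : ‖q‖ < 1) {x : ℂ} (hx : ‖x‖ ≤ 1) :
    Hf q a (q * x) = (1 - q * x) * Hf q a x := by
  have hq1 : qPoch q q 1 = 1 - q := by simp [qPoch]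
  have h1q : (1 : ℂ) - q ≠ 0 := one_sub_q_ne hq
  have hqx : ‖q * x‖ ≤ 1 := by
    rw [norm_mul]
    nlinarith [norm_nonneg q, norm_nonneg x]
  have Sv : Summable
      (fun k => q ^ (k + 1) * (q * x - a) * Pp q a (q * x) k / qPoch q q (k + 1)) := by
    have := summable_aux (a := a) hq hqx (fun k => q ^ (k + 1) * (q * x - a))
      (fun k => k) (fun k => k + 1) (Cc := ‖q‖ * ‖q * x - a‖)
      (fun k => by
        rw [norm_mul, norm_pow]
        exact le_of_eq (by ring))
    exact this
  have hterm : ∀ k : ℕ,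
      q ^ (k + 1 + 1) * (q * x - a) * Pp q a (q * x) (k + 1) / qPoch q q (k + 1 + 1)
      = (q * (q * x - a) * (x - a))
        * (q ^ (2 * k + 2) * Pp q a x k / qPoch q q (k + 1 + 1)) := by
    intro k
    rw [Pp_shift]
    ring
  have hsh := Summable.tsum_eq_zero_add Sv
  norm_num [Pp_zero, hq1] at hsh
  rw [tsum_congr hterm, tsum_mul_left] at hsh
  have hu : ∀ k : ℕ, q ^ (k + 1) * (x - a) * Pp q a x k / qPoch q q (k + 1)
      = (q * (x - a)) * (q ^ k * Pp q a x k / qPoch q q (k + 1)) := by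
    intro k; ring
  unfold Hf
  rw [hsh, tsum_congr hu, tsum_mul_left]
  have hfrac3 : 1 + q * (q * x - a) / (1 - q) = 1 - q * x + q * (x - a) / (1 - q) := by
    field_simp
    ring
  linear_combination (-(q * (x - a))) * (key_C1 (a := a) hq hx) + hfrac3

end Part6b
section Part7
open Finset Filter Topology QAux

variable {q a : ℂ}

lemma summable_Phi (hq : ‖q‖ < 1) (x : ℂ) :
    Summable (fun m : ℕ => (-x) ^ m * q ^ Smn m / qPoch q q m) := by
  have hD := qPoch_q_ne_zero hq
  have hrec : ∀ m : ℕ, (-x) ^ (m + 1) * q ^ Smn (m + 1) / qPoch q q (m + 1)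
      = ((-x) ^ m * q ^ Smn m / qPoch q q m) * ((-x) * q ^ (m + 1) / (1 - q ^ (m + 1))) := by
    intro m
    have e : (1 : ℂ) - q * q ^ m = 1 - q ^ (m + 1) := by ring
    rw [Smn_succ, qPoch_succ, e, pow_add, pow_succ]
    field_simp
    ring
  apply summable_of_ratio_norm_eventually_le hq
  have h1 : Tendsto (fun m : ℕ => ‖x‖ * ‖q‖ ^ m) atTop (𝓝 0) := by
    simpa using (tendsto_pow_atTop_nhds_zero_of_lt_one (norm_nonneg q) hq).const_mul ‖x‖
  have h2 : Tendsto (fun m : ℕ => ‖q‖ ^ (m + 1)) atTop (𝓝 0) :=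
    (tendsto_pow_atTop_nhds_zero_of_lt_one (norm_nonneg q) hq).comp
      (tendsto_add_atTop_nat 1)
  filter_upwards [h1.eventually (eventually_le_nhds (by norm_num : (0:ℝ) < 2⁻¹)),
    h2.eventually (eventually_le_nhds (by norm_num : (0:ℝ) < 2⁻¹))] with m hm1 hm2
  rw [hrec m, norm_mul]
  have h3 : ‖(-x) * q ^ (m + 1) / (1 - q ^ (m + 1))‖ ≤ ‖q‖ := by
    rw [norm_div, norm_mul, norm_neg, norm_pow]
    have h4 : (1 : ℝ) - ‖q‖ ^ (m + 1) ≤ ‖1 - q ^ (m + 1)‖ := by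
      have h5 := norm_sub_norm_le (1 : ℂ) (q ^ (m + 1))
      rw [norm_one, norm_pow] at h5
      exact h5
    have h6 : (0:ℝ) < 1 - ‖q‖ ^ (m + 1) := by linarith
    rw [div_le_iff₀ (by linarith : (0:ℝ) < ‖1 - q ^ (m + 1)‖)]
    have h7 : ‖x‖ * ‖q‖ ^ (m + 1) = ‖q‖ * (‖x‖ * ‖q‖ ^ m) := by ring
    calc ‖x‖ * ‖q‖ ^ (m + 1) = ‖q‖ * (‖x‖ * ‖q‖ ^ m) := h7
      _ ≤ ‖q‖ * (1 - ‖q‖ ^ (m + 1)) := by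
          apply mul_le_mul_of_nonneg_left _ (norm_nonneg q)
          linarith
      _ ≤ ‖q‖ * ‖1 - q ^ (m + 1)‖ := by
          apply mul_le_mul_of_nonneg_left h4 (norm_nonneg q)
  calc ‖(-x) ^ m * q ^ Smn m / qPoch q q m‖ * ‖(-x) * q ^ (m + 1) / (1 - q ^ (m + 1))‖
      ≤ ‖(-x) ^ m * q ^ Smn m / qPoch q q m‖ * ‖q‖ := by
        apply mul_le_mul_of_nonneg_left h3 (norm_nonneg _)
    _ = ‖q‖ * ‖(-x) ^ m * q ^ Smn m / qPoch q q m‖ := by ring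

lemma Phi_funeq (hq : ‖q‖ < 1) (x : ℂ) :
    Phi q a x = (1 - q * x) * Phi q a (q * x) := by
  have hD := qPoch_q_ne_zero hq
  have S1 := summable_Phi hq x
  have S2 := summable_Phi hq (q * x)
  have Ssub := S1.sub S2
  have hsh := Summable.tsum_eq_zero_add Ssub
  have h0 : (-x) ^ 0 * q ^ Smn 0 / qPoch q q 0
      - (-(q * x)) ^ 0 * q ^ Smn 0 / qPoch q q 0 = 0 := by
    simp [Smn, qPoch_zero]
  have hterm : ∀ m : ℕ,
      (-x) ^ (m + 1) * q ^ Smn (m + 1) / qPoch q q (m + 1)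
        - (-(q * x)) ^ (m + 1) * q ^ Smn (m + 1) / qPoch q q (m + 1)
      = -(q * x) * ((-(q * x)) ^ m * q ^ Smn m / qPoch q q m) := by
    intro m
    have e : (1 : ℂ) - q * q ^ m = 1 - q ^ (m + 1) := by ring
    have h1 := hD m
    have h2 : (1 : ℂ) - q ^ (m + 1) ≠ 0 := one_sub_pow_ne hq m
    rw [Smn_succ, qPoch_succ, e]
    field_simp
    ring
  rw [h0] at hsh
  rw [tsum_congr hterm, tsum_mul_left] at hsh
  have hPhisub : ∑' m : ℕ, ((-x) ^ m * q ^ Smn m / qPoch q q m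
      - (-(q * x)) ^ m * q ^ Smn m / qPoch q q m)
      = Phi q a x - Phi q a (q * x) := Summable.tsum_sub S1 S2
  rw [hPhisub] at hsh
  have hP2 : (∑' m : ℕ, (-(q * x)) ^ m * q ^ Smn m / qPoch q q m) = Phi q a (q * x) := rfl
  rw [hP2] at hsh
  linear_combination hsh

lemma Phi_zero (q a : ℂ) : Phi q a 0 = 1 := by
  rw [Phi]
  rw [tsum_eq_single 0 ?h]
  · simp [Smn, qPoch_zero]
  · intro m hm
    simp [zero_pow hm, neg_zero]

lemma Phi_iter (hq : ‖q‖ < 1) (y : ℂ) (n : ℕ) :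
    Phi q a y = (∏ i ∈ range n, (1 - y * q ^ (i + 1))) * Phi q a (q ^ n * y) := by
  induction n with
  | zero => simp
  | succ n ih =>
    rw [ih, Phi_funeq hq (q ^ n * y), Finset.prod_range_succ]
    have e : q * (q ^ n * y) = q ^ (n + 1) * y := by ring
    rw [e]
    ring

lemma Phi_tendsto (hq : ‖q‖ < 1) (y : ℂ) :
    Tendsto (fun n => Phi q a (q ^ n * y)) atTop (𝓝 1) := by
  rw [show (1 : ℂ) = Phi q a 0 from (Phi_zero q a).symm]
  have hy : Tendsto (fun n : ℕ => q ^ n * y) atTop (𝓝 0) := by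
    simpa using (tendsto_pow_atTop_nhds_zero_of_norm_lt_one hq).mul_const y
  have hD := qPoch_q_ne_zero hq
  have hKpos := (Kq_spec hq).1
  -- dominated convergence
  have hdct := tendsto_tsum_of_dominated_convergence
    (𝓕 := atTop)
    (f := fun (n : ℕ) (m : ℕ) => (-(q ^ n * y)) ^ m * q ^ Smn m / qPoch q q m)
    (g := fun m => (-(0:ℂ)) ^ m * q ^ Smn m / qPoch q q m)
    (bound := fun m => ‖(-((‖y‖:ℂ))) ^ m * q ^ Smn m / qPoch q q m‖)
    (summable_norm_iff.mpr (summable_Phi hq ((‖y‖:ℂ))))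
    ?_ ?_
  · have h1 : Phi q a 0 = ∑' m : ℕ, (-(0:ℂ)) ^ m * q ^ Smn m / qPoch q q m := by rw [Phi]
    rw [h1]
    exact hdct.congr (fun n => by rw [Phi])
  · intro m
    have hcont : Continuous (fun z : ℂ => (-z) ^ m * q ^ Smn m / qPoch q q m) := by
      apply Continuous.div_const
      exact ((continuous_neg).pow m).mul continuous_const
    exact (hcont.tendsto 0).comp hy
  · filter_upwards with n
    intro m
    simp only [norm_div, norm_mul, norm_pow, norm_neg]
    have h2 : ‖((‖y‖ : ℝ) : ℂ)‖ = ‖y‖ := by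
      simp [abs_of_nonneg (norm_nonneg y)]
    rw [h2]
    apply div_le_div₀ ?_ ?_ ?_ le_rfl
    · positivity
    · have hb2 : ‖q‖ ^ n * ‖y‖ ≤ ‖y‖ := by
        calc ‖q‖ ^ n * ‖y‖ ≤ 1 * ‖y‖ :=
              mul_le_mul_of_nonneg_right (pow_le_one₀ (norm_nonneg q) hq.le) (norm_nonneg y)
          _ = ‖y‖ := one_mul _
      exact mul_le_mul_of_nonneg_right (pow_le_pow_left₀ (by positivity) hb2 m)
        (pow_nonneg (norm_nonneg q) _)
    · rw [norm_pos_iff]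
      exact hD m

end Part7
section Part7b
open Finset Filter Topology QAux

variable {q a b : ℂ}

lemma Hf_iter (hq : ‖q‖ < 1) (hb : ‖b‖ ≤ 1) (n : ℕ) :
    Hf q a (q ^ n * b) = Hf q a b * ∏ i ∈ range n, (1 - b * q ^ (i + 1)) := by
  induction n with
  | zero => simp
  | succ n ih =>
    have hxn : ‖q ^ n * b‖ ≤ 1 := by
      rw [norm_mul, norm_pow]
      calc ‖q‖ ^ n * ‖b‖ ≤ 1 * 1 := by
            apply mul_le_mul (pow_le_one₀ (norm_nonneg q) hq.le) hb (norm_nonneg b)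
              (by norm_num)
        _ = 1 := by norm_num
    have e : q ^ (n + 1) * b = q * (q ^ n * b) := by ring
    rw [e, Hf_funeq hq hxn, ih, Finset.prod_range_succ]
    ring

lemma Hf_cont_zero (hq : ‖q‖ < 1) (hb : ‖b‖ ≤ 1) :
    Tendsto (fun n => Hf q a (q ^ n * b)) atTop (𝓝 (Hf q a 0)) := by
  have hy : Tendsto (fun n : ℕ => q ^ n * b) atTop (𝓝 0) := by
    simpa using (tendsto_pow_atTop_nhds_zero_of_norm_lt_one hq).mul_const b
  have hD := qPoch_q_ne_zero hq
  have hKpos := (Kq_spec hq).1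
  have hdct := tendsto_tsum_of_dominated_convergence
    (𝓕 := (atTop : Filter ℕ))
    (f := fun (n : ℕ) (k : ℕ) =>
      q ^ (k + 1) * (q ^ n * b - a) * Pp q a (q ^ n * b) k / qPoch q q (k + 1))
    (g := fun k => q ^ (k + 1) * ((0:ℂ) - a) * Pp q a 0 k / qPoch q q (k + 1))
    (bound := fun k =>
      (‖q‖ * ((1 + ‖a‖) * (Real.exp (‖a‖ * (1 - ‖q‖)⁻¹) / Kq q))) * ‖q‖ ^ k)
    (((summable_geometric_of_lt_one (norm_nonneg q) hq).mul_left _)) ?_ ?_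
  · have hHf : ∀ x : ℂ, Hf q a x
        = 1 + ∑' k : ℕ, q ^ (k + 1) * (x - a) * Pp q a x k / qPoch q q (k + 1) := by
      intro x; rw [Hf]
    simp only [hHf]
    exact hdct.const_add 1
  · intro k
    have hP : Continuous (fun x : ℂ => Pp q a x k) := by
      simp only [Pp]
      exact continuous_finset_prod _ (fun i _ => continuous_id.sub continuous_const)
    have hcont : Continuous
        (fun x : ℂ => q ^ (k + 1) * (x - a) * Pp q a x k / qPoch q q (k + 1)) := by
      apply Continuous.div_const
      exact (continuous_const.mul (continuous_id.sub continuous_const)).mul hP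
    exact (hcont.tendsto 0).comp hy
  · filter_upwards with n
    intro k
    have hxn : ‖q ^ n * b‖ ≤ 1 := by
      rw [norm_mul, norm_pow]
      calc ‖q‖ ^ n * ‖b‖ ≤ 1 * 1 := by
            apply mul_le_mul (pow_le_one₀ (norm_nonneg q) hq.le) hb (norm_nonneg b)
              (by norm_num)
        _ = 1 := by norm_num
    rw [norm_div, norm_mul, norm_mul, norm_pow]
    have h1 : ‖q ^ n * b - a‖ ≤ 1 + ‖a‖ := by
      calc ‖q ^ n * b - a‖ ≤ ‖q ^ n * b‖ + ‖a‖ := norm_sub_le _ _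
        _ ≤ 1 + ‖a‖ := by linarith
    have h2 : ‖Pp q a (q ^ n * b) k‖ ≤ Real.exp (‖a‖ * (1 - ‖q‖)⁻¹) :=
      norm_Pp_le hq a hxn k
    have h3 : Kq q ≤ ‖qPoch q q (k + 1)‖ := norm_qPoch_q_ge hq (k + 1)
    have h4 : ‖q‖ ^ (k + 1) * ‖q ^ n * b - a‖ * ‖Pp q a (q ^ n * b) k‖
        ≤ ‖q‖ ^ (k + 1) * ((1 + ‖a‖) * Real.exp (‖a‖ * (1 - ‖q‖)⁻¹)) := by
      rw [mul_assoc]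
      apply mul_le_mul_of_nonneg_left _ (pow_nonneg (norm_nonneg q) _)
      apply mul_le_mul h1 h2 (norm_nonneg _) (by positivity)
    calc ‖q‖ ^ (k + 1) * ‖q ^ n * b - a‖ * ‖Pp q a (q ^ n * b) k‖ / ‖qPoch q q (k + 1)‖
        ≤ ‖q‖ ^ (k + 1) * ((1 + ‖a‖) * Real.exp (‖a‖ * (1 - ‖q‖)⁻¹)) / Kq q :=
          div_le_div₀ (by positivity) h4 hKpos h3
      _ = (‖q‖ * ((1 + ‖a‖) * (Real.exp (‖a‖ * (1 - ‖q‖)⁻¹) / Kq q))) * ‖q‖ ^ k := by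
          rw [pow_succ]
          field_simp

lemma Hf_zero_eq (hq : ‖q‖ < 1) : Hf q a 0 = Phi q a a := by
  have hsh := Summable.tsum_eq_zero_add (summable_Phi (q := q) hq a)
  have h0 : (-a) ^ 0 * q ^ Smn 0 / qPoch q q 0 = 1 := by simp [Smn, qPoch_zero]
  rw [h0] at hsh
  have hterm : ∀ k : ℕ, q ^ (k + 1) * ((0:ℂ) - a) * Pp q a 0 k / qPoch q q (k + 1)
      = (-a) ^ (k + 1) * q ^ Smn (k + 1) / qPoch q q (k + 1) := by
    intro k
    rw [Pp_at_zero, Smn_succ, pow_add]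
    ring
  rw [Hf, Phi, hsh, tsum_congr hterm]

lemma Phi_eq_qPochInf (hq : ‖q‖ < 1) : Phi q a a = qPochInf q (a * q) := by
  have hprod : ∀ n, ∏ i ∈ range n, (1 - a * q ^ (i + 1)) = qPoch q (a * q) n := by
    intro n
    rw [qPoch]
    apply Finset.prod_congr rfl
    intro i _
    ring
  have h1 : Tendsto (fun n => (∏ i ∈ range n, (1 - a * q ^ (i + 1))) * Phi q a (q ^ n * a))
      atTop (𝓝 (qPochInf q (a * q) * 1)) := by
    apply Tendsto.mul _ (Phi_tendsto hq a)
    have := tendsto_qPoch hq (a * q)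
    apply this.congr
    intro n
    exact (hprod n).symm
  have h2 : Tendsto (fun _ : ℕ => Phi q a a) atTop (𝓝 (Phi q a a)) := tendsto_const_nhds
  have h3 := h1.congr (fun n => (Phi_iter hq a n).symm)
  have := tendsto_nhds_unique h2 h3
  rw [mul_one] at this
  exact this

lemma Hf_zero_eq_mul (hq : ‖q‖ < 1) (hb : ‖b‖ ≤ 1) :
    Hf q a 0 = Hf q a b * qPochInf q (b * q) := by
  have hprod : ∀ n, ∏ i ∈ range n, (1 - b * q ^ (i + 1)) = qPoch q (b * q) n := by
    intro n
    rw [qPoch]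
    apply Finset.prod_congr rfl
    intro i _
    ring
  have h1 : Tendsto (fun n => Hf q a b * ∏ i ∈ range n, (1 - b * q ^ (i + 1)))
      atTop (𝓝 (Hf q a b * qPochInf q (b * q))) := by
    apply Tendsto.const_mul
    exact (tendsto_qPoch hq (b * q)).congr (fun n => (hprod n).symm)
  have h2 := (Hf_cont_zero (a := a) hq hb).congr (fun n => Hf_iter hq hb n)
  exact tendsto_nhds_unique (h2.congr (fun n => rfl)) h1

end Part7b
section Part8
open Finset Filter Topology QAux

variable {q a b : ℂ}

noncomputable def Ef (q a b : ℂ) (N : ℕ) : ℂ :=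
  Pp q a b (N + 1) / qPoch q q N * gf q a b (q ^ (N + 1))
    + (1 - b) * ∑ n ∈ range (N + 1), Pp q a b n / qPoch q q n

lemma norm_qpow_lt (hq : ‖q‖ < 1) (N : ℕ) : ‖q ^ (N + 1)‖ < 1 := by
  rw [norm_pow]
  exact pow_lt_one₀ (norm_nonneg q) hq (Nat.succ_ne_zero N)

lemma Ef_succ (hq : ‖q‖ < 1) (hb1 : ‖b‖ ≤ 1) (N : ℕ) :
    Ef q a b (N + 1) = Ef q a b N := by
  have hz : ‖q ^ (N + 1)‖ < 1 := norm_qpow_lt hq N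
  have funeq := gf_funeq (a := a) hq hb1 hz
  have hDN := qPoch_q_ne_zero hq N
  have hDN1 := qPoch_q_ne_zero hq (N + 1)
  have h1z : (1 : ℂ) - q ^ (N + 1) ≠ 0 := one_sub_pow_ne hq N
  have e1 : q ^ (N + 1 + 1) = q * q ^ (N + 1) := by ring
  have e2 : qPoch q q (N + 1) = qPoch q q N * (1 - q ^ (N + 1)) := by
    rw [qPoch_succ]
    congr 1
    ring
  rw [Ef, Ef, Finset.sum_range_succ, Pp_succ, e1, e2]
  field_simp
  linear_combination Pp q a b (N + 1) * funeq

lemma FI (hq : ‖q‖ < 1) (N : ℕ) :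
    (1 - b) * ∑ n ∈ range (N + 1), Pp q a b n / qPoch q q n
      = 1 - b * Pp q a b N / qPoch q q N
        + (b - a) * ∑ k ∈ range N, q ^ (k + 1) * Pp q a b k / qPoch q q (k + 1) := by
  induction N with
  | zero => simp [Pp_zero, qPoch_zero]
  | succ N ih =>
    have hDN := qPoch_q_ne_zero hq N
    have hDN1 := qPoch_q_ne_zero hq (N + 1)
    have h1z : (1 : ℂ) - q ^ (N + 1) ≠ 0 := one_sub_pow_ne hq N
    have e2 : qPoch q q (N + 1) = qPoch q q N * (1 - q ^ (N + 1)) := by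
      rw [qPoch_succ]; congr 1; ring
    rw [Finset.sum_range_succ (f := fun n => Pp q a b n / qPoch q q n), mul_add, ih,
      Finset.sum_range_succ, Pp_succ, e2]
    field_simp
    ring

lemma gf_tendsto_one (hq : ‖q‖ < 1) (hb1 : ‖b‖ ≤ 1) :
    Tendsto (fun N : ℕ => gf q a b (q ^ (N + 1))) atTop (𝓝 1) := by
  have hz : Tendsto (fun N : ℕ => q ^ (N + 1)) atTop (𝓝 0) :=
    (tendsto_pow_atTop_nhds_zero_of_norm_lt_one hq).comp (tendsto_add_atTop_nat 1)
  have hdct := tendsto_tsum_of_dominated_convergence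
    (𝓕 := (atTop : Filter ℕ))
    (f := fun (N : ℕ) (n : ℕ) => cf q a b n * (q ^ (N + 1)) ^ n)
    (g := fun n => cf q a b n * (0 : ℂ) ^ n)
    (bound := fun n => (Real.exp (‖a * q‖ * (1 - ‖q‖)⁻¹) / Kq q) * ‖q‖ ^ n)
    (((summable_geometric_of_lt_one (norm_nonneg q) hq).mul_left _)) ?_ ?_
  · have hlim : ∑' n : ℕ, cf q a b n * (0 : ℂ) ^ n = 1 := by
      rw [tsum_eq_single 0 ?h]
      · simp [cf_zero]
      · intro n hn
        simp [zero_pow hn]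
    rw [hlim] at hdct
    exact hdct.congr (fun N => by rw [gf])
  · intro n
    have hcont : Continuous (fun z : ℂ => cf q a b n * z ^ n) :=
      continuous_const.mul (continuous_pow n)
    exact (hcont.tendsto 0).comp hz
  · filter_upwards with N
    intro n
    rw [norm_mul, norm_pow, norm_pow]
    have h2 : ‖q‖ ^ (N + 1) ≤ ‖q‖ := by
      calc ‖q‖ ^ (N + 1) ≤ ‖q‖ ^ 1 := pow_le_pow_of_le_one (norm_nonneg q) hq.le (by omega)
        _ = ‖q‖ := pow_one _
    have h3 : (‖q‖ ^ (N + 1)) ^ n ≤ ‖q‖ ^ n :=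
      pow_le_pow_left₀ (by positivity) h2 n
    calc ‖cf q a b n‖ * (‖q‖ ^ (N + 1)) ^ n
        ≤ (Real.exp (‖a * q‖ * (1 - ‖q‖)⁻¹) / Kq q) * ‖q‖ ^ n := by
          apply mul_le_mul (norm_cf_le hq hb1 n) h3 (by positivity) ?_
          have := (Kq_spec hq).1
          positivity

lemma Hf_eq' (hq : ‖q‖ < 1) (hb1 : ‖b‖ ≤ 1) :
    Hf q a b = 1 + (b - a) * ∑' k : ℕ, q ^ (k + 1) * Pp q a b k / qPoch q q (k + 1) := by
  rw [Hf]
  congr 1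
  have h1 : ∀ k : ℕ, q ^ (k + 1) * (b - a) * Pp q a b k / qPoch q q (k + 1)
      = (b - a) * (q ^ (k + 1) * Pp q a b k / qPoch q q (k + 1)) := by
    intro k; ring
  rw [tsum_congr h1, tsum_mul_left]

lemma Ef_tendsto (hq : ‖q‖ < 1) (hb1 : ‖b‖ ≤ 1) :
    Tendsto (Ef q a b) atTop (𝓝 (Hf q a b)) := by
  have Su : Summable (fun k => q ^ (k + 1) * Pp q a b k / qPoch q q (k + 1)) := by
    have := summable_aux (a := a) hq hb1 (fun k => q ^ (k + 1)) (fun k => k)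
      (fun k => k + 1) (Cc := ‖q‖)
      (fun k => by rw [norm_pow, pow_succ]; exact le_of_eq (by ring))
    exact this
  have hEf : ∀ N, Ef q a b N
      = (Pp q a b N / qPoch q q N) * ((b - a * q ^ (N + 1)) * gf q a b (q ^ (N + 1)) - b)
        + 1 + (b - a) * ∑ k ∈ range N, q ^ (k + 1) * Pp q a b k / qPoch q q (k + 1) := by
    intro N
    rw [Ef, FI hq, Pp_succ]
    ring
  have hT1 : Tendsto (fun N =>
      (Pp q a b N / qPoch q q N) * ((b - a * q ^ (N + 1)) * gf q a b (q ^ (N + 1)) - b))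
      atTop (𝓝 0) := by
    have hfac : Tendsto (fun N : ℕ => (b - a * q ^ (N + 1)) * gf q a b (q ^ (N + 1)) - b)
        atTop (𝓝 0) := by
      have hz : Tendsto (fun N : ℕ => q ^ (N + 1)) atTop (𝓝 0) :=
        (tendsto_pow_atTop_nhds_zero_of_norm_lt_one hq).comp (tendsto_add_atTop_nat 1)
      have h1 : Tendsto (fun N : ℕ => b - a * q ^ (N + 1)) atTop (𝓝 b) := by
        have := (hz.const_mul a).const_sub b
        simpa using this
      have h2 := h1.mul (gf_tendsto_one (a := a) hq hb1)
      rw [mul_one] at h2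
      have := h2.sub_const b
      simpa using this
    have hbound : ∀ N : ℕ,
        ‖Pp q a b N / qPoch q q N * ((b - a * q ^ (N + 1)) * gf q a b (q ^ (N + 1)) - b)‖
        ≤ (Real.exp (‖a‖ * (1 - ‖q‖)⁻¹) / Kq q)
          * ‖(b - a * q ^ (N + 1)) * gf q a b (q ^ (N + 1)) - b‖ := by
      intro N
      rw [norm_mul, norm_div]
      apply mul_le_mul_of_nonneg_right _ (norm_nonneg _)
      exact div_le_div₀ (Real.exp_pos _).le (norm_Pp_le hq a hb1 N) (Kq_spec hq).1
        (norm_qPoch_q_ge hq N)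
    have hg0 : Tendsto (fun N : ℕ => (Real.exp (‖a‖ * (1 - ‖q‖)⁻¹) / Kq q)
        * ‖(b - a * q ^ (N + 1)) * gf q a b (q ^ (N + 1)) - b‖) atTop (𝓝 0) := by
      have := (hfac.norm).const_mul (Real.exp (‖a‖ * (1 - ‖q‖)⁻¹) / Kq q)
      simpa using this
    exact squeeze_zero_norm hbound hg0
  have hT2 : Tendsto (fun N => ∑ k ∈ range N, q ^ (k + 1) * Pp q a b k / qPoch q q (k + 1))
      atTop (𝓝 (∑' k : ℕ, q ^ (k + 1) * Pp q a b k / qPoch q q (k + 1))) :=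
    Su.hasSum.tendsto_sum_nat
  have hcomb := (hT1.add ((tendsto_const_nhds : Tendsto (fun _ : ℕ => (1:ℂ)) atTop (𝓝 1)))).add (hT2.const_mul (b - a))
  rw [zero_add] at hcomb
  have := hcomb.congr (fun N => (hEf N).symm)
  rw [Hf_eq' hq hb1]
  exact this

lemma Ef_const (hq : ‖q‖ < 1) (hb1 : ‖b‖ ≤ 1) (N : ℕ) :
    Ef q a b N = Hf q a b := by
  have hconst : ∀ M, Ef q a b M = Ef q a b 0 := by
    intro M
    induction M with
    | zero => rfl
    | succ M ih => rw [Ef_succ hq hb1 M, ih]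
  have h1 : Tendsto (Ef q a b) atTop (𝓝 (Ef q a b 0)) :=
    tendsto_const_nhds.congr (fun n => (hconst n).symm)
  have h2 := tendsto_nhds_unique h1 (Ef_tendsto hq hb1)
  rw [hconst N, h2]

end Part8
open Finset Filter Topology QAux in
theorem stmt4 (q : ℂ) (h0 : 0 < ‖q‖) (h1 : ‖q‖ < 1)
    (N : ℕ) (a b : ℂ) (hb0 : 0 < ‖b‖) (hb1 : ‖b‖ ≤ 1)
    (hd : qPoch q (a * q / b) (N + 1) ≠ 0)
    (hbq : ∀ m : ℕ, b ≠ q ^ (-(m : ℤ))) :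
    b ^ (N + 1) * ∑' n : ℕ, qPoch q (a * q) n / qPoch q (b * q) n * q ^ ((N + 1) * n) =
      (1 / (1 - q ^ (N + 1))) * (qPoch q q (N + 1) / qPoch q (a * q / b) (N + 1)) *
        ((if b = 1 then qPochInf q (a * q) / qPochInf q q
            else (1 - b) * (qPochInf q (a * q) / qPochInf q b)) -
          (1 - b) * ∑ n ∈ Finset.range (N + 1), qPoch q (a * q / b) n * b ^ n / qPoch q q n) := by
  have hq : ‖q‖ < 1 := by exact h1
  have hbn : ‖b‖ ≤ 1 := by exact hb1
  have hb0' : b ≠ 0 := by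
    intro hc
    rw [hc] at hb0
    simp at hb0
  have hbne1 : b ≠ 1 := by
    have := hbq 0
    simpa using this
  have h1b : (1 : ℂ) - b ≠ 0 := by
    intro hc
    apply hbne1
    linear_combination -hc
  have hB : qPochInf q (b * q) ≠ 0 := by
    have ht := (tendsto_qPoch hq (b * q)).norm
    have hK := (Kq_spec hq).1
    have hge : Kq q ≤ ‖qPochInf q (b * q)‖ :=
      ge_of_tendsto ht (Filter.Eventually.of_forall (fun n => norm_qPoch_mul_ge hq hbn n))
    intro hc
    rw [hc, norm_zero] at hge
    linarith
  have hsplit : qPochInf q b = (1 - b) * qPochInf q (b * q) := qPochInf_split hq b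
  have hA : qPochInf q (a * q) = Hf q a b * qPochInf q (b * q) := by
    rw [← Phi_eq_qPochInf hq, ← Hf_zero_eq hq, Hf_zero_eq_mul hq hbn]
  have hHfb : Hf q a b = qPochInf q (a * q) / qPochInf q (b * q) := by
    rw [hA]
    field_simp
  have hLHS : (∑' n : ℕ, qPoch q (a * q) n / qPoch q (b * q) n * q ^ ((N + 1) * n))
      = gf q a b (q ^ (N + 1)) := by
    rw [gf]
    apply tsum_congr
    intro n
    rw [cf, pow_mul]
  have hS : (∑ n ∈ Finset.range (N + 1), qPoch q (a * q / b) n * b ^ n / qPoch q q n)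
      = ∑ n ∈ Finset.range (N + 1), Pp q a b n / qPoch q q n := by
    apply Finset.sum_congr rfl
    intro n _
    rw [Pp_eq_qPoch q a b hb0' n]
    ring
  have hE := Ef_const (a := a) (b := b) hq hbn N
  rw [Ef, hHfb] at hE
  have hP1 : Pp q a b (N + 1) = b ^ (N + 1) * qPoch q (a * q / b) (N + 1) :=
    Pp_eq_qPoch q a b hb0' (N + 1)
  have hQ1 : qPoch q q (N + 1) = qPoch q q N * (1 - q ^ (N + 1)) := by
    rw [qPoch_succ]
    congr 1
    ring
  have h1z : (1 : ℂ) - q ^ (N + 1) ≠ 0 := one_sub_pow_ne hq N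
  have hDN := qPoch_q_ne_zero hq N
  rw [hP1] at hE
  have hkey : qPochInf q (a * q) / qPochInf q (b * q)
      - (1 - b) * ∑ n ∈ Finset.range (N + 1), Pp q a b n / qPoch q q n
      = b ^ (N + 1) * qPoch q (a * q / b) (N + 1) * gf q a b (q ^ (N + 1)) / qPoch q q N := by
    linear_combination -hE
  have hcancel : (1 - b) * (qPochInf q (a * q) / ((1 - b) * qPochInf q (b * q)))
      = qPochInf q (a * q) / qPochInf q (b * q) := by
    field_simp
  rw [if_neg hbne1, hLHS, hS, hsplit, hQ1, hcancel, hkey]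
  field_simp
end
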